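/- arXiv:2210.14023 — 4 statements merged into one kernel-verified Lean document; each statement's English description precedes it below -/
import Mathlib

section
/- Let A and B be positive definite n×n complex matrices. Then there exists a unitary matrix U such that the geometric mean satisfies A # B = A^{1/2} U B^{1/2}. -/
open Matrix Finset
open scoped ComplexOrder

variable {n m : ℕ}

/-- Real power of a Hermitian matrix via the spectral theorem (junk value `0` otherwise). -/
noncomputable def mrpow (A : Matrix (Fin n) (Fin n) ℂ) (r : ℝ) : Matrix (Fin n) (Fin n) ℂ :=
  if hA : A.IsHermitian then
    (hA.eigenvectorUnitary : Matrix (Fin n) (Fin n) ℂ) *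
      Matrix.diagonal (fun i => ((hA.eigenvalues i ^ r : ℝ) : ℂ)) *
      (hA.eigenvectorUnitary : Matrix (Fin n) (Fin n) ℂ)ᴴ
  else 0

/-- The decreasing rearrangement of a tuple of reals. -/
noncomputable def dsort (x : Fin n → ℝ) (i : Fin n) : ℝ := x (Tuple.sort x i.rev)

/-- Singular values of a complex matrix, in decreasing order. -/
noncomputable def sv (A : Matrix (Fin n) (Fin n) ℂ) : Fin n → ℝ :=
  dsort (fun i => Real.sqrt ((Matrix.isHermitian_conjTranspose_mul_self A).eigenvalues i))

/-- Eigenvalues of a Hermitian matrix in decreasing order (junk value `0` otherwise). -/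
noncomputable def evals (A : Matrix (Fin n) (Fin n) ℂ) : Fin n → ℝ :=
  if hA : A.IsHermitian then dsort hA.eigenvalues else 0

/-- Weak majorization `x ≺_w y`. -/
def WMaj (x y : Fin n → ℝ) : Prop :=
  ∀ k : Fin n, ∑ i ∈ Finset.Iic k, dsort x i ≤ ∑ i ∈ Finset.Iic k, dsort y i

/-- Weak log-majorization `x ≺_{w log} y`. -/
def WLogMaj (x y : Fin n → ℝ) : Prop :=
  ∀ k : Fin n, ∏ i ∈ Finset.Iic k, dsort x i ≤ ∏ i ∈ Finset.Iic k, dsort y i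

/-- Log-majorization `x ≺_{log} y`. -/
def LogMaj (x y : Fin n → ℝ) : Prop :=
  WLogMaj x y ∧ ∏ i, x i = ∏ i, y i

/-- The `t`-geometric mean of matrices. -/
noncomputable def gmt (t : ℝ) (A B : Matrix (Fin n) (Fin n) ℂ) : Matrix (Fin n) (Fin n) ℂ :=
  mrpow A (1/2) * mrpow (mrpow A (-(1/2)) * B * mrpow A (-(1/2))) t * mrpow A (1/2)

/-- The geometric mean `A # B` of matrices. -/
noncomputable def gm (A B : Matrix (Fin n) (Fin n) ℂ) : Matrix (Fin n) (Fin n) ℂ :=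
  gmt (1/2) A B

/-- The trace norm (sum of singular values). -/
noncomputable def traceNorm (A : Matrix (Fin n) (Fin n) ℂ) : ℝ := ∑ i, sv A i

/-- A seminorm on matrices is unitarily invariant if `N (U * X * V) = N X` for all unitaries. -/
def UInv (N : Matrix (Fin m) (Fin m) ℂ → ℝ) : Prop :=
  ∀ U ∈ Matrix.unitaryGroup (Fin m) ℂ, ∀ V ∈ Matrix.unitaryGroup (Fin m) ℂ,
    ∀ X : Matrix (Fin m) (Fin m) ℂ, N (U * X * V) = N X

/-- The `2n × 2n` block matrix with the given `n × n` blocks. -/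
noncomputable def bm (X Y Z W : Matrix (Fin n) (Fin n) ℂ) :
    Matrix (Fin (n + n)) (Fin (n + n)) ℂ :=
  Matrix.reindex finSumFinEquiv finSumFinEquiv (Matrix.fromBlocks X Y Z W)

/-- The matrix absolute value `|A| = (AᴴA)^{1/2}`. -/
noncomputable def matAbs (A : Matrix (Fin n) (Fin n) ℂ) : Matrix (Fin n) (Fin n) ℂ :=
  mrpow (Aᴴ * A) (1/2)


section Aux

lemma aux_conj {M B : Matrix (Fin n) (Fin n) ℂ} (hB : B.PosDef) (hM : IsUnit M) :
    (M * B * Mᴴ).PosDef := by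
  refine Matrix.PosDef.of_dotProduct_mulVec_pos (Matrix.isHermitian_mul_mul_conjTranspose _ hB.1) fun x hx => ?_
  have hy : Mᴴ *ᵥ x ≠ 0 := by
    intro h
    have hMH : IsUnit Mᴴ := by rw [← Matrix.star_eq_conjTranspose]; exact hM.star
    have := (Matrix.mulVec_injective_iff_isUnit.mpr hMH) (a₁ := x) (a₂ := 0) (by simpa using h)
    exact hx this
  have := hB.dotProduct_mulVec_pos hy
  calc (0 : ℂ) < star (Mᴴ *ᵥ x) ⬝ᵥ B *ᵥ (Mᴴ *ᵥ x) := this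
    _ = star x ⬝ᵥ (M * B * Mᴴ) *ᵥ x := by
        rw [Matrix.star_mulVec, Matrix.conjTranspose_conjTranspose,
          ← Matrix.dotProduct_mulVec, Matrix.mulVec_mulVec, Matrix.mulVec_mulVec,
          Matrix.mul_assoc]

lemma mrpow_eq (A : Matrix (Fin n) (Fin n) ℂ) (hA : A.IsHermitian) (r : ℝ) :
    mrpow A r = (hA.eigenvectorUnitary : Matrix (Fin n) (Fin n) ℂ) *
      Matrix.diagonal (fun i => ((hA.eigenvalues i ^ r : ℝ) : ℂ)) *
      (hA.eigenvectorUnitary : Matrix (Fin n) (Fin n) ℂ)ᴴ := by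
  rw [mrpow, dif_pos hA]

lemma mrpow_isHermitian {A : Matrix (Fin n) (Fin n) ℂ} (hA : A.IsHermitian) (r : ℝ) :
    (mrpow A r).IsHermitian := by
  rw [mrpow_eq A hA r]
  apply Matrix.isHermitian_mul_mul_conjTranspose
  rw [Matrix.IsHermitian, Matrix.diagonal_conjTranspose]
  have : (star fun i => ((hA.eigenvalues i ^ r : ℝ) : ℂ)) =
      fun i => ((hA.eigenvalues i ^ r : ℝ) : ℂ) := by
    funext i
    exact Complex.conj_ofReal _
  rw [this]

lemma mrpow_posDef {A : Matrix (Fin n) (Fin n) ℂ} (hA : A.PosDef) (r : ℝ) :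
    (mrpow A r).PosDef := by
  rw [mrpow_eq A hA.1 r]
  have hd : (Matrix.diagonal fun i => ((hA.1.eigenvalues i ^ r : ℝ) : ℂ)).PosDef :=
    Matrix.posDef_diagonal_iff.mpr fun i =>
      Complex.zero_lt_real.mpr (Real.rpow_pos_of_pos (hA.eigenvalues_pos i) r)
  exact aux_conj hd ⟨Unitary.toUnits hA.1.eigenvectorUnitary, rfl⟩

lemma unitary_conj_mul {U D E : Matrix (Fin n) (Fin n) ℂ} (hU : Uᴴ * U = 1) :
    (U * D * Uᴴ) * (U * E * Uᴴ) = U * (D * E) * Uᴴ := by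
  calc (U * D * Uᴴ) * (U * E * Uᴴ) = U * (D * ((Uᴴ * U) * (E * Uᴴ))) := by
        simp only [Matrix.mul_assoc]
    _ = U * (D * E) * Uᴴ := by rw [hU, Matrix.one_mul]; simp only [Matrix.mul_assoc]

lemma mrpow_mul_mrpow {A : Matrix (Fin n) (Fin n) ℂ} (hA : A.PosDef) (r s : ℝ) :
    mrpow A r * mrpow A s = mrpow A (r + s) := by
  have hU : (hA.1.eigenvectorUnitary : Matrix (Fin n) (Fin n) ℂ)ᴴ *
      (hA.1.eigenvectorUnitary : Matrix (Fin n) (Fin n) ℂ) = 1 :=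
    (Matrix.mem_unitaryGroup_iff').mp (hA.1.eigenvectorUnitary).2
  rw [mrpow_eq A hA.1 r, mrpow_eq A hA.1 s, mrpow_eq A hA.1 (r + s),
    unitary_conj_mul hU, Matrix.diagonal_mul_diagonal]
  have : (fun i => ((hA.1.eigenvalues i ^ r : ℝ) : ℂ) * ((hA.1.eigenvalues i ^ s : ℝ) : ℂ)) =
      fun i => ((hA.1.eigenvalues i ^ (r + s) : ℝ) : ℂ) := by
    funext i
    rw [← Complex.ofReal_mul, ← Real.rpow_add (hA.eigenvalues_pos i)]
  rw [this]

lemma mrpow_zero {A : Matrix (Fin n) (Fin n) ℂ} (hA : A.IsHermitian) : mrpow A 0 = 1 := by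
  rw [mrpow_eq A hA 0]
  simp only [Real.rpow_zero, Complex.ofReal_one, Matrix.diagonal_one, Matrix.mul_one]
  exact (Matrix.mem_unitaryGroup_iff).mp hA.eigenvectorUnitary.2

lemma mrpow_one {A : Matrix (Fin n) (Fin n) ℂ} (hA : A.IsHermitian) : mrpow A 1 = A := by
  rw [mrpow_eq A hA 1]
  simp only [Real.rpow_one]
  exact (hA.spectral_theorem).symm

end Aux

theorem stmt0 {n : ℕ} (A B : Matrix (Fin n) (Fin n) ℂ)
    (hA : A.PosDef) (hB : B.PosDef) :
    ∃ U ∈ Matrix.unitaryGroup (Fin n) ℂ,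
      gm A B = mrpow A (1/2) * U * mrpow B (1/2) := by
  classical
  set M := mrpow A (-(1/2)) with hM
  set C := M * B * M with hC
  have hMh : M.IsHermitian := mrpow_isHermitian hA.1 _
  have hCpd : C.PosDef := by
    have := aux_conj hB (mrpow_posDef hA (-(1/2))).isUnit
    rwa [hMh.eq] at this
  have h2 : mrpow A (1/2) * M = 1 := by
    rw [hM, mrpow_mul_mrpow hA, show (1/2 : ℝ) + -(1/2) = 0 by norm_num, mrpow_zero hA.1]
  have h1 : M * mrpow A (1/2) = 1 := by
    rw [hM, mrpow_mul_mrpow hA, show (-(1/2) : ℝ) + 1/2 = 0 by norm_num, mrpow_zero hA.1]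
  have hBB : mrpow B (-(1/2)) * mrpow B (-(1/2)) = mrpow B (-1) := by
    rw [mrpow_mul_mrpow hB]; norm_num
  have hBinv : mrpow B (-1) * B = 1 := by
    have h : mrpow B (-1) * mrpow B 1 = 1 := by
      rw [mrpow_mul_mrpow hB, show (-1 : ℝ) + 1 = 0 by norm_num, mrpow_zero hB.1]
    rwa [mrpow_one hB.1] at h
  have hBinv' : B * mrpow B (-1) = 1 := by
    have h : mrpow B 1 * mrpow B (-1) = 1 := by
      rw [mrpow_mul_mrpow hB, show (1 : ℝ) + -1 = 0 by norm_num, mrpow_zero hB.1]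
    rwa [mrpow_one hB.1] at h
  have hCD : C * mrpow C (-1) = 1 := by
    have h : mrpow C 1 * mrpow C (-1) = 1 := by
      rw [mrpow_mul_mrpow hCpd, show (1 : ℝ) + -1 = 0 by norm_num, mrpow_zero hCpd.1]
    rwa [mrpow_one hCpd.1] at h
  have hXC : (mrpow A (1/2) * mrpow B (-1) * mrpow A (1/2)) * C = 1 := by
    rw [hC]
    calc (mrpow A (1/2) * mrpow B (-1) * mrpow A (1/2)) * (M * B * M)
        = mrpow A (1/2) * (mrpow B (-1) * ((mrpow A (1/2) * M) * (B * M))) := by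
          simp only [Matrix.mul_assoc]
      _ = 1 := by
          rw [h2, Matrix.one_mul, ← Matrix.mul_assoc (mrpow B (-1)) B M, hBinv,
            Matrix.one_mul, h2]
  have hXD : mrpow A (1/2) * mrpow B (-1) * mrpow A (1/2) = mrpow C (-1) := by
    calc mrpow A (1/2) * mrpow B (-1) * mrpow A (1/2)
        = (mrpow A (1/2) * mrpow B (-1) * mrpow A (1/2)) * (C * mrpow C (-1)) := by
          rw [hCD, Matrix.mul_one]
      _ = ((mrpow A (1/2) * mrpow B (-1) * mrpow A (1/2)) * C) * mrpow C (-1) := by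
          simp only [Matrix.mul_assoc]
      _ = mrpow C (-1) := by rw [hXC, Matrix.one_mul]
  refine ⟨mrpow C (1/2) * mrpow A (1/2) * mrpow B (-(1/2)), ?_, ?_⟩
  · rw [Matrix.mem_unitaryGroup_iff]
    have hstar : star (mrpow C (1/2) * mrpow A (1/2) * mrpow B (-(1/2))) =
        mrpow B (-(1/2)) * mrpow A (1/2) * mrpow C (1/2) := by
      simp only [Matrix.star_eq_conjTranspose, Matrix.conjTranspose_mul,
        (mrpow_isHermitian hA.1 (1/2 : ℝ)).eq, (mrpow_isHermitian hB.1 (-(1/2) : ℝ)).eq,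
        (mrpow_isHermitian hCpd.1 (1/2 : ℝ)).eq, Matrix.mul_assoc]
    rw [hstar]
    calc (mrpow C (1/2) * mrpow A (1/2) * mrpow B (-(1/2))) *
          (mrpow B (-(1/2)) * mrpow A (1/2) * mrpow C (1/2))
        = mrpow C (1/2) * (mrpow A (1/2) * ((mrpow B (-(1/2)) * mrpow B (-(1/2))) *
            (mrpow A (1/2) * mrpow C (1/2)))) := by simp only [Matrix.mul_assoc]
      _ = mrpow C (1/2) * ((mrpow A (1/2) * mrpow B (-1) * mrpow A (1/2)) * mrpow C (1/2)) := by
          rw [hBB]; simp only [Matrix.mul_assoc]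
      _ = mrpow C (1/2) * (mrpow C (-1) * mrpow C (1/2)) := by rw [hXD]
      _ = 1 := by
          rw [mrpow_mul_mrpow hCpd, mrpow_mul_mrpow hCpd,
            show (1/2 : ℝ) + (-1 + 1/2) = 0 by norm_num, mrpow_zero hCpd.1]
  · have hB2 : mrpow B (-(1/2)) * mrpow B (1/2) = 1 := by
      rw [mrpow_mul_mrpow hB, show (-(1/2) : ℝ) + 1/2 = 0 by norm_num, mrpow_zero hB.1]
    have key : mrpow A (1/2) * (mrpow C (1/2) * mrpow A (1/2) * mrpow B (-(1/2))) *
        mrpow B (1/2) = mrpow A (1/2) * mrpow C (1/2) * mrpow A (1/2) := by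
      calc mrpow A (1/2) * (mrpow C (1/2) * mrpow A (1/2) * mrpow B (-(1/2))) * mrpow B (1/2)
          = mrpow A (1/2) * (mrpow C (1/2) * (mrpow A (1/2) *
              (mrpow B (-(1/2)) * mrpow B (1/2)))) := by simp only [Matrix.mul_assoc]
        _ = mrpow A (1/2) * mrpow C (1/2) * mrpow A (1/2) := by
            rw [hB2, Matrix.mul_one]; simp only [Matrix.mul_assoc]
    rw [key, gm, gmt, ← hM, ← hC]
end

section
/- Let x and y be n-tuples of nonnegative real numbers such that x is weakly majorized by y. Then for every r ≥ 1, the tuple (x_1^r, ..., x_n^r) is weakly majorized by (y_1^r, ..., y_n^r). -/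
open Matrix Finset
open scoped ComplexOrder

variable {n m : ℕ}

private lemma bernoulli_aux {a b r : ℝ} (ha : 0 ≤ a) (hb : 0 ≤ b) (hr : 1 ≤ r) :
    a ^ r - b ^ r ≤ r * a ^ (r - 1) * (a - b) := by
  rcases eq_or_lt_of_le ha with h | h
  · -- a = 0
    subst h
    rw [Real.zero_rpow (by linarith : r ≠ 0)]
    rcases eq_or_lt_of_le hr with h1 | h1
    · rw [← h1]
      simp [Real.rpow_zero]
    · rw [Real.zero_rpow (by linarith : r - 1 ≠ 0)]
      have : 0 ≤ b ^ r := Real.rpow_nonneg hb r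
      nlinarith
  · have h0 : (0:ℝ) < a := h
    have hs : (-1:ℝ) ≤ b / a - 1 := by
      have : 0 ≤ b / a := div_nonneg hb h0.le
      linarith
    have key := one_add_mul_self_le_rpow_one_add hs hr
    have hba : (1 : ℝ) + (b / a - 1) = b / a := by ring
    rw [hba] at key
    have hapow : (0:ℝ) < a ^ r := Real.rpow_pos_of_pos h0 r
    have key2 := mul_le_mul_of_nonneg_right key hapow.le
    rw [Real.div_rpow hb h0.le, div_mul_cancel₀ _ (ne_of_gt hapow)] at key2
    have hsub : a ^ (r - 1) = a ^ r / a := by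
      rw [Real.rpow_sub h0, Real.rpow_one]
    have : (1 + r * (b / a - 1)) * a ^ r = a ^ r + r * (a ^ r / a) * (b - a) := by
      field_simp
    rw [this] at key2
    rw [hsub]
    linarith

private lemma abel_nonpos (d : ℕ → ℝ) :
    ∀ (k : ℕ) (c : ℕ → ℝ), (∀ i ≤ k, 0 ≤ c i) →
      (∀ i j, i ≤ j → j ≤ k → c j ≤ c i) →
      (∀ j ≤ k, ∑ i ∈ Finset.range (j + 1), d i ≤ 0) →
      ∑ i ∈ Finset.range (k + 1), c i * d i ≤ 0 := by
  intro k
  induction k with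
  | zero =>
    intro c hc _ hd
    simpa using mul_nonpos_of_nonneg_of_nonpos (hc 0 le_rfl) (by simpa using hd 0 le_rfl)
  | succ k ih =>
    intro c hc hanti hd
    have hck1 : 0 ≤ c (k + 1) := hc _ le_rfl
    have h1 : ∑ i ∈ Finset.range (k + 1), (c i - c (k + 1)) * d i ≤ 0 := by
      apply ih
      · intro i hi
        have := hanti i (k + 1) (by omega) le_rfl
        linarith
      · intro i j hij hj
        have := hanti i j hij (by omega)
        linarith
      · intro j hj
        exact hd j (by omega)
    have h2 : c (k + 1) * ∑ i ∈ Finset.range (k + 2), d i ≤ 0 :=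
      mul_nonpos_of_nonneg_of_nonpos hck1 (hd (k + 1) le_rfl)
    have expand : ∑ i ∈ Finset.range (k + 2), c i * d i =
        ∑ i ∈ Finset.range (k + 1), (c i - c (k + 1)) * d i
          + c (k + 1) * ∑ i ∈ Finset.range (k + 2), d i := by
      rw [Finset.sum_range_succ, Finset.sum_range_succ d, mul_add, Finset.mul_sum]
      simp only [sub_mul, Finset.sum_sub_distrib]
      ring
    rw [expand]
    linarith

private lemma sum_Iic_eq_range {n : ℕ} (f : Fin n → ℝ) (k : Fin n) :
    ∑ i ∈ Finset.Iic k, f i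
      = ∑ j ∈ Finset.range (k.1 + 1), if h : j < n then f ⟨j, h⟩ else 0 := by
  rw [show Finset.range (k.1 + 1) = Finset.Iic k.1 by ext a; simp [Nat.lt_succ_iff],
    ← Fin.map_valEmbedding_Iic, Finset.sum_map]
  apply Finset.sum_congr rfl
  intro i _
  simp [Fin.valEmbedding]



private lemma dsort_anti' {n : ℕ} (x : Fin n → ℝ) {i j : Fin n} (hij : i ≤ j) :
    dsort x j ≤ dsort x i :=
  Tuple.monotone_sort x (Fin.rev_le_rev.mpr hij)

private lemma dsort_comp' {n : ℕ} (x : Fin n → ℝ) (hx : ∀ i, 0 ≤ x i) (g : ℝ → ℝ)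
    (hg : ∀ a b : ℝ, 0 ≤ a → a ≤ b → g a ≤ g b) :
    dsort (fun i => g (x i)) = fun i => g (dsort x i) := by
  have h1 : Monotone ((fun i => g (x i)) ∘ (Tuple.sort x)) := by
    intro a b hab
    exact hg _ _ (hx _) (Tuple.monotone_sort x hab)
  have h2 := Tuple.unique_monotone (f := fun i => g (x i)) h1
    (Tuple.monotone_sort (fun i => g (x i)))
  funext i
  exact (congrFun h2 i.rev).symm

theorem stmt1 {n : ℕ} (x y : Fin n → ℝ) (hx : ∀ i, 0 ≤ x i) (hy : ∀ i, 0 ≤ y i)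
    (hxy : WMaj x y) :
    ∀ r : ℝ, 1 ≤ r → WMaj (fun i => x i ^ r) (fun i => y i ^ r) := by
  intro r hr k
  have hr0 : (0:ℝ) ≤ r := by linarith
  have hrne : r ≠ 0 := by linarith
  have hg : ∀ a b : ℝ, 0 ≤ a → a ≤ b → a ^ r ≤ b ^ r := fun a b ha hab =>
    Real.rpow_le_rpow ha hab hr0
  rw [dsort_comp' x hx (fun t => t ^ r) hg, dsort_comp' y hy (fun t => t ^ r) hg]
  beta_reduce
  set a := dsort x with ha_def
  set b := dsort y with hb_def
  have ha : ∀ i, 0 ≤ a i := fun i => hx _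
  have hb : ∀ i, 0 ≤ b i := fun i => hy _
  set A : ℕ → ℝ := fun j => if h : j < n then a ⟨j, h⟩ else 0 with hA
  set B : ℕ → ℝ := fun j => if h : j < n then b ⟨j, h⟩ else 0 with hB
  have hA0 : ∀ j, 0 ≤ A j := by
    intro j; simp only [hA]; split
    · exact ha _
    · exact le_rfl
  have hB0 : ∀ j, 0 ≤ B j := by
    intro j; simp only [hB]; split
    · exact hb _
    · exact le_rfl
  have hconvA : ∑ i ∈ Finset.Iic k, a i ^ r = ∑ j ∈ Finset.range (k.1 + 1), A j ^ r := by
    rw [sum_Iic_eq_range (fun i => a i ^ r) k]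
    apply Finset.sum_congr rfl
    intro j _
    simp only [hA]
    split
    · rfl
    · rw [Real.zero_rpow hrne]
  have hconvB : ∑ i ∈ Finset.Iic k, b i ^ r = ∑ j ∈ Finset.range (k.1 + 1), B j ^ r := by
    rw [sum_Iic_eq_range (fun i => b i ^ r) k]
    apply Finset.sum_congr rfl
    intro j _
    simp only [hB]
    split
    · rfl
    · rw [Real.zero_rpow hrne]
  rw [hconvA, hconvB, ← sub_nonpos, ← Finset.sum_sub_distrib]
  have step1 : ∑ j ∈ Finset.range (k.1 + 1), (A j ^ r - B j ^ r)
      ≤ ∑ j ∈ Finset.range (k.1 + 1), (r * A j ^ (r - 1)) * (A j - B j) :=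
    Finset.sum_le_sum fun j _ => bernoulli_aux (hA0 j) (hB0 j) hr
  refine le_trans step1 (abel_nonpos (fun j => A j - B j) k.1 (fun j => r * A j ^ (r - 1))
    ?_ ?_ ?_)
  · intro i _
    exact mul_nonneg hr0 (Real.rpow_nonneg (hA0 i) _)
  · intro i j hij hj
    have hjn : j < n := lt_of_le_of_lt hj k.isLt
    have hin : i < n := lt_of_le_of_lt hij hjn
    simp only [hA, dif_pos hjn, dif_pos hin]
    apply mul_le_mul_of_nonneg_left _ hr0
    exact Real.rpow_le_rpow (ha _) (dsort_anti' x (Fin.mk_le_mk.mpr hij)) (by linarith)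
  · intro j hj
    have hjn : j < n := lt_of_le_of_lt hj k.isLt
    rw [Finset.sum_sub_distrib, sub_nonpos]
    have e1 := sum_Iic_eq_range a ⟨j, hjn⟩
    have e2 := sum_Iic_eq_range b ⟨j, hjn⟩
    simp only at e1 e2
    rw [← e1, ← e2]
    exact hxy ⟨j, hjn⟩
end

section
/- Let A and B be n×n complex matrices. Then for every unitarily invariant norm on 2n×2n matrices, the norm of the block diagonal matrix diag(A, B) is at most the norm of diag(|A| + |B|, 0). Equivalently, for all k = 1, ..., 2n, Σ_{i≤k} s_i(diag(A,B)) ≤ Σ_{i≤k} s_i(diag(|A|+|B|, 0)). -/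
open Matrix Finset
open scoped ComplexOrder

variable {n m : ℕ}

namespace Aux



variable {n : ℕ}

/-- multiset of values of a tuple -/
def mult (x : Fin n → ℝ) : Multiset ℝ := (List.ofFn x : List ℝ)

lemma mult_comp_perm (x : Fin n → ℝ) (π : Equiv.Perm (Fin n)) : mult (x ∘ π) = mult x :=
  Multiset.coe_eq_coe.mpr (π.ofFn_comp_perm x)

lemma dsort_eq_comp (x : Fin n → ℝ) :
    dsort x = x ∘ (Fin.revPerm.trans (Tuple.sort x)) := rfl

lemma mult_dsort (x : Fin n → ℝ) : mult (dsort x) = mult x := by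
  rw [dsort_eq_comp]; exact mult_comp_perm x _

lemma dsort_antitone (x : Fin n → ℝ) : Antitone (dsort x) := by
  intro i j hij
  have h := Tuple.monotone_sort x
  exact h (Fin.rev_le_rev.mpr hij)

lemma antitone_ofFn_sorted {x : Fin n → ℝ} (hx : Antitone x) :
    List.Pairwise (· ≥ ·) (List.ofFn x) := by
  rw [List.pairwise_ofFn]
  intro i j hij
  exact hx hij.le

/-- uniqueness: an antitone tuple with the same multiset as `x` is `dsort x`. -/
lemma dsort_unique {x y : Fin n → ℝ} (hy : Antitone y) (h : mult y = mult x) :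
    y = dsort x := by
  have hperm : (List.ofFn y).Perm (List.ofFn (dsort x)) := by
    rw [← Multiset.coe_eq_coe]
    exact h.trans (mult_dsort x).symm
  have := List.Perm.eq_of_pairwise' (antitone_ofFn_sorted hy)
    (antitone_ofFn_sorted (dsort_antitone x)) hperm
  exact List.ofFn_injective this

lemma dsort_congr {x y : Fin n → ℝ} (h : mult x = mult y) : dsort x = dsort y :=
  dsort_unique (dsort_antitone x) ((mult_dsort x).trans h)




variable {n : ℕ}

lemma dsort_nonneg {x : Fin n → ℝ} (hx : ∀ i, 0 ≤ x i) (i : Fin n) : 0 ≤ dsort x i := hx _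

lemma mult_map (x : Fin n → ℝ) (f : ℝ → ℝ) : mult (f ∘ x) = (mult x).map f := by
  simp [mult, List.map_ofFn]

lemma dsort_scale (r : ℝ) (hr : 0 ≤ r) (x : Fin n → ℝ) :
    dsort (fun i => r * x i) = fun i => r * dsort x i := by
  refine (dsort_unique (fun i j hij => ?_) ?_).symm
  · exact mul_le_mul_of_nonneg_left (dsort_antitone x hij) hr
  · have h1 : (fun i => r * dsort x i) = (fun t => r * t) ∘ dsort x := rfl
    have h2 : (fun i => r * x i) = (fun t => r * t) ∘ x := rfl
    rw [h1, h2, mult_map, mult_map, mult_dsort]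

lemma mult_eq_map (x : Fin n → ℝ) : mult x = Multiset.map x Finset.univ.val := by
  simp [mult, Fin.univ_def, List.ofFn_eq_map]

/-- the diagonal matrix with real entries `d` -/
noncomputable def Rd {m : ℕ} (d : Fin m → ℝ) : Matrix (Fin m) (Fin m) ℂ :=
  Matrix.diagonal (fun i => (d i : ℂ))

lemma Rd_conjTranspose {m : ℕ} (d : Fin m → ℝ) : (Rd d)ᴴ = Rd d := by
  simp [Rd, Matrix.diagonal_conjTranspose]

lemma Rd_mul_Rd {m : ℕ} (d e : Fin m → ℝ) : Rd d * Rd e = Rd (fun i => d i * e i) := by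
  simp [Rd, Matrix.diagonal_mul_diagonal]

lemma det_smul_one_sub {m : ℕ} (z : ℂ) (d : Fin m → ℝ) {U : Matrix (Fin m) (Fin m) ℂ}
    (hU : U ∈ Matrix.unitaryGroup (Fin m) ℂ) :
    Matrix.det (z • 1 - U * Rd d * Uᴴ) = ∏ i, (z - (d i : ℂ)) := by
  have hUU : U * Uᴴ = 1 := by
    have := Matrix.mem_unitaryGroup_iff.mp hU
    rwa [Matrix.star_eq_conjTranspose] at this
  have h1 : z • (1 : Matrix (Fin m) (Fin m) ℂ) = U * (z • 1) * Uᴴ := by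
    rw [Matrix.mul_smul, Matrix.smul_mul, Matrix.mul_one, hUU]
  rw [h1, ← Matrix.sub_mul, ← Matrix.mul_sub, Matrix.det_mul, Matrix.det_mul]
  rw [mul_comm (Matrix.det U), mul_assoc, ← Matrix.det_mul, hUU]
  have h2 : z • (1 : Matrix (Fin m) (Fin m) ℂ) - Rd d
      = Matrix.diagonal (fun i => z - (d i : ℂ)) := by
    rw [Matrix.smul_one_eq_diagonal, Rd, Matrix.diagonal_sub]
  simp [h2, Matrix.det_diagonal]

lemma mult_eigenvalues_of_conj {m : ℕ} {H U : Matrix (Fin m) (Fin m) ℂ} (hH : H.IsHermitian)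
    (hU : U ∈ Matrix.unitaryGroup (Fin m) ℂ) (d : Fin m → ℝ)
    (h : H = U * Rd d * Uᴴ) : mult hH.eigenvalues = mult d := by
  have hspec : H = (hH.eigenvectorUnitary : Matrix (Fin m) (Fin m) ℂ) * Rd hH.eigenvalues *
      (hH.eigenvectorUnitary : Matrix (Fin m) (Fin m) ℂ)ᴴ := by
    have := hH.spectral_theorem
    rwa [Unitary.conjStarAlgAut_apply, Matrix.star_eq_conjTranspose] at this
  have heval : ∀ z : ℂ, ∏ i, (z - (hH.eigenvalues i : ℂ)) = ∏ i, (z - (d i : ℂ)) := by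
    intro z
    rw [← det_smul_one_sub z hH.eigenvalues (hH.eigenvectorUnitary).2, ← hspec,
      h, det_smul_one_sub z d hU]
  have hpoly : (∏ i, (Polynomial.X - Polynomial.C ((hH.eigenvalues i : ℂ)))) =
      ∏ i, (Polynomial.X - Polynomial.C ((d i : ℂ))) := by
    apply Polynomial.funext
    intro z
    simpa [Polynomial.eval_prod] using heval z
  have hroots := congrArg Polynomial.roots hpoly
  have key : ∀ e : Fin m → ℝ,
      (∏ i, (Polynomial.X - Polynomial.C ((e i : ℂ)))).roots
        = (mult e).map (fun r : ℝ => (r : ℂ)) := by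
    intro e
    rw [Finset.prod_eq_multiset_prod]
    rw [show Multiset.map (fun i => Polynomial.X - Polynomial.C ((e i : ℂ))) Finset.univ.val
        = Multiset.map (fun a : ℂ => Polynomial.X - Polynomial.C a)
            (Multiset.map (fun i => ((e i : ℂ))) Finset.univ.val) by
      rw [Multiset.map_map]; rfl]
    rw [Polynomial.roots_multiset_prod_X_sub_C]
    rw [mult_eq_map, Multiset.map_map]
    rfl
  rw [key, key] at hroots
  exact Multiset.map_injective Complex.ofReal_injective hroots




lemma col_ext {m : ℕ} (C : Matrix (Fin m) (Fin m) ℂ) (lam : Fin m → ℝ)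
    (h : Cᴴ * C = Rd lam) :
    ∃ V ∈ Matrix.unitaryGroup (Fin m) ℂ, V * Rd (fun i => Real.sqrt (lam i)) = C := by
  classical
  have hij : ∀ i j, (∑ k, (starRingEnd ℂ) (C k i) * C k j)
      = if i = j then (lam i : ℂ) else 0 := by
    intro i j
    have := congrFun (congrFun h i) j
    simpa [Matrix.mul_apply, Rd, Matrix.conjTranspose_apply, Matrix.diagonal_apply] using this
  have hlam : ∀ i, lam i = ∑ k, Complex.normSq (C k i) := by
    intro i
    have h1 := hij i i
    simp only [eq_self_iff_true, if_true] at h1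
    have : ((lam i : ℂ)) = ((∑ k, Complex.normSq (C k i) : ℝ) : ℂ) := by
      rw [← h1]
      push_cast
      congr 1
      funext k
      rw [mul_comm, Complex.mul_conj]
    exact_mod_cast this
  have hlam0 : ∀ i, 0 ≤ lam i := fun i => (hlam i) ▸ Finset.sum_nonneg fun k _ =>
    Complex.normSq_nonneg _
  set σ : Fin m → ℝ := fun i => Real.sqrt (lam i) with hσ
  set v : Fin m → EuclideanSpace ℂ (Fin m) :=
    fun j => WithLp.toLp 2 (fun k => ((σ j : ℂ))⁻¹ * C k j) with hv
  set s : Set (Fin m) := {j | lam j ≠ 0} with hs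
  have honb : Orthonormal ℂ (s.restrict v) := by
    rw [orthonormal_iff_ite]
    rintro ⟨i, hi⟩ ⟨j, hj⟩
    have hinner : (inner ℂ (v i) (v j) : ℂ) =
        ((σ i : ℂ))⁻¹ * ((σ j : ℂ))⁻¹ * (if i = j then (lam i : ℂ) else 0) := by
      rw [PiLp.inner_apply, ← hij i j]
      rw [Finset.mul_sum]
      congr 1
      funext k
      simp only [hv, PiLp.toLp_apply, RCLike.inner_apply, _root_.map_mul, map_inv₀, Complex.conj_ofReal]
      ring
    have hσi : (σ i : ℝ) ≠ 0 := Real.sqrt_ne_zero'.mpr (lt_of_le_of_ne (hlam0 i) (Ne.symm hi))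
    change (inner ℂ (v i) (v j) : ℂ) = _
    rw [hinner]
    by_cases hij' : i = j
    · subst hij'
      rw [if_pos rfl, if_pos (Subtype.ext rfl)]
      have hσc : ((σ i : ℂ)) ≠ 0 := by exact_mod_cast hσi
      have hσ2 : ((σ i : ℂ)) * ((σ i : ℂ)) = (lam i : ℂ) := by
        have := Real.mul_self_sqrt (hlam0 i)
        exact_mod_cast this
      field_simp
      linear_combination -hσ2
    · rw [if_neg hij', if_neg (fun hc => hij' (congrArg Subtype.val hc)), mul_zero]
  obtain ⟨b, hb⟩ := honb.exists_orthonormalBasis_extension_of_card_eq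
    (by simp [finrank_euclideanSpace])
  refine ⟨Matrix.of fun k j => b j k, ?_, ?_⟩
  · rw [Matrix.mem_unitaryGroup_iff', Matrix.star_eq_conjTranspose]
    ext i j
    have hb2 := orthonormal_iff_ite.mp b.orthonormal i j
    rw [PiLp.inner_apply] at hb2
    simp only [RCLike.inner_apply] at hb2
    simp only [Matrix.mul_apply, Matrix.conjTranspose_apply, Matrix.of_apply, Matrix.one_apply,
      Matrix.star_apply]
    rw [← hb2]
    exact Finset.sum_congr rfl fun _ _ => mul_comm _ _
  · ext k j
    rw [show Rd σ = Matrix.diagonal (fun i => (σ i : ℂ)) from rfl, Matrix.mul_diagonal]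
    simp only [Matrix.of_apply]
    by_cases hj : lam j = 0
    · have hcj : C k j = 0 := by
        have h0 : ∑ k', Complex.normSq (C k' j) = 0 := by rw [← hlam j, hj]
        have := (Finset.sum_eq_zero_iff_of_nonneg
          (fun k' _ => Complex.normSq_nonneg (C k' j))).mp h0 k (Finset.mem_univ k)
        exact Complex.normSq_eq_zero.mp this
      simp [hcj, hσ, hj]
    · have hbj : b j = v j := hb j hj
      have hσj : (σ j : ℝ) ≠ 0 := Real.sqrt_ne_zero'.mpr (lt_of_le_of_ne (hlam0 j) (Ne.symm hj))
      rw [hbj]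
      show ((σ j : ℂ))⁻¹ * C k j * (σ j : ℂ) = C k j
      have : ((σ j : ℂ)) ≠ 0 := by exact_mod_cast hσj
      field_simp



end Aux


namespace Aux

open Matrix

variable {m : ℕ}

local notation "UG" => Matrix.unitaryGroup (Fin m) ℂ

lemma UG_star_mem {U : Matrix (Fin m) (Fin m) ℂ} (hU : U ∈ UG) : Uᴴ ∈ UG := by
  rw [← Matrix.star_eq_conjTranspose]
  exact Unitary.star_mem hU

lemma UG_mul_cancel {U : Matrix (Fin m) (Fin m) ℂ} (hU : U ∈ UG) : U * Uᴴ = 1 := by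
  have := Matrix.mem_unitaryGroup_iff.mp hU
  rwa [Matrix.star_eq_conjTranspose] at this

lemma UG_mul_cancel' {U : Matrix (Fin m) (Fin m) ℂ} (hU : U ∈ UG) : Uᴴ * U = 1 := by
  have := Matrix.mem_unitaryGroup_iff'.mp hU
  rwa [Matrix.star_eq_conjTranspose] at this

lemma spectral_Rd {H : Matrix (Fin m) (Fin m) ℂ} (hH : H.IsHermitian) :
    H = (hH.eigenvectorUnitary : Matrix (Fin m) (Fin m) ℂ) * Rd hH.eigenvalues *
      (hH.eigenvectorUnitary : Matrix (Fin m) (Fin m) ℂ)ᴴ := by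
  have := hH.spectral_theorem
  rwa [Unitary.conjStarAlgAut_apply, Matrix.star_eq_conjTranspose] at this

lemma sv_eq_of_conj {M U : Matrix (Fin m) (Fin m) ℂ} (hU : U ∈ UG)
    (d : Fin m → ℝ) (h : Mᴴ * M = U * Rd d * Uᴴ) :
    sv M = dsort (fun i => Real.sqrt (d i)) := by
  have h1 := mult_eigenvalues_of_conj (Matrix.isHermitian_conjTranspose_mul_self M) hU d h
  apply dsort_congr
  have e1 : (fun i => Real.sqrt ((Matrix.isHermitian_conjTranspose_mul_self M).eigenvalues i))
      = Real.sqrt ∘ (Matrix.isHermitian_conjTranspose_mul_self M).eigenvalues := rfl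
  have e2 : (fun i => Real.sqrt (d i)) = Real.sqrt ∘ d := rfl
  rw [e1, e2, mult_map, mult_map, h1]

lemma sv_self_eq {M : Matrix (Fin m) (Fin m) ℂ} :
    sv M = dsort (fun i => Real.sqrt ((Matrix.isHermitian_conjTranspose_mul_self M).eigenvalues i)) :=
  rfl

lemma sv_unitary {M U V : Matrix (Fin m) (Fin m) ℂ} (hU : U ∈ UG) (hV : V ∈ UG) :
    sv (U * M * V) = sv M := by
  have hH := Matrix.isHermitian_conjTranspose_mul_self M
  have hW : (hH.eigenvectorUnitary : Matrix (Fin m) (Fin m) ℂ) ∈ UG := hH.eigenvectorUnitary.2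
  set W : Matrix (Fin m) (Fin m) ℂ := (hH.eigenvectorUnitary : Matrix (Fin m) (Fin m) ℂ) with hWdef
  have hs : Mᴴ * M = W * Rd hH.eigenvalues * Wᴴ := spectral_Rd hH
  have h0 : (U * M * V)ᴴ * (U * M * V) = Vᴴ * (Mᴴ * M) * V := by
    have hUU : Uᴴ * U = 1 := UG_mul_cancel' hU
    calc (U * M * V)ᴴ * (U * M * V) = Vᴴ * (Mᴴ * ((Uᴴ * U) * M)) * V := by
          simp only [Matrix.conjTranspose_mul, Matrix.mul_assoc]
      _ = Vᴴ * (Mᴴ * M) * V := by rw [hUU, Matrix.one_mul]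
  have h2 : (U * M * V)ᴴ * (U * M * V) = (Vᴴ * W) * Rd hH.eigenvalues * (Vᴴ * W)ᴴ := by
    rw [h0]
    conv_lhs => rw [hs]
    simp only [Matrix.conjTranspose_mul, Matrix.conjTranspose_conjTranspose, Matrix.mul_assoc]
  rw [sv_eq_of_conj (mul_mem (UG_star_mem hV) hW) _ h2, sv_eq_of_conj hW _ hs]

lemma sv_smul (c : ℂ) (M : Matrix (Fin m) (Fin m) ℂ) :
    sv (c • M) = fun i => ‖c‖ * sv M i := by
  have hH := Matrix.isHermitian_conjTranspose_mul_self M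
  have hW : (hH.eigenvectorUnitary : Matrix (Fin m) (Fin m) ℂ) ∈ UG := hH.eigenvectorUnitary.2
  set W : Matrix (Fin m) (Fin m) ℂ := (hH.eigenvectorUnitary : Matrix (Fin m) (Fin m) ℂ) with hWdef
  have hs : Mᴴ * M = W * Rd hH.eigenvalues * Wᴴ := spectral_Rd hH
  set r : ℝ := ‖c‖ with hr
  have h2 : (c • M)ᴴ * (c • M) = W * Rd (fun i => r ^ 2 * hH.eigenvalues i) * Wᴴ := by
    rw [Matrix.conjTranspose_smul, Matrix.smul_mul, Matrix.mul_smul, smul_smul]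
    have hc : (star c) * c = ((r ^ 2 : ℝ) : ℂ) := by
      rw [Complex.star_def, mul_comm, Complex.mul_conj]
      norm_cast
      rw [Complex.normSq_eq_norm_sq, hr]
    rw [hc]
    conv_lhs => rw [hs]
    have hsm : ((r ^ 2 : ℝ) : ℂ) • Rd hH.eigenvalues
        = Rd (fun i => r ^ 2 * hH.eigenvalues i) := by
      ext i j
      by_cases hij2 : i = j
      · subst hij2
        simp only [Matrix.smul_apply, Rd, Matrix.diagonal_apply_eq, smul_eq_mul]
        push_cast
        ring
      · simp [Rd, Matrix.diagonal_apply_ne _ hij2]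
    rw [← Matrix.smul_mul, ← Matrix.mul_smul, hsm]
  rw [sv_eq_of_conj hW _ h2, sv_eq_of_conj hW _ hs]
  have h3 : (fun i => Real.sqrt (r ^ 2 * hH.eigenvalues i))
      = fun i => r * Real.sqrt (hH.eigenvalues i) := by
    funext i
    rw [Real.sqrt_mul (sq_nonneg r), Real.sqrt_sq (norm_nonneg c)]
  rw [h3, dsort_scale r (norm_nonneg c)]

lemma sv_nonneg (M : Matrix (Fin m) (Fin m) ℂ) (i : Fin m) : 0 ≤ sv M i :=
  Real.sqrt_nonneg _

lemma sv_antitone (M : Matrix (Fin m) (Fin m) ℂ) : Antitone (sv M) :=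
  dsort_antitone _

lemma mrpow_half_eq {H : Matrix (Fin m) (Fin m) ℂ} (hH : H.IsHermitian) :
    mrpow H (1/2) = (hH.eigenvectorUnitary : Matrix (Fin m) (Fin m) ℂ) *
      Rd (fun i => Real.sqrt (hH.eigenvalues i)) *
      (hH.eigenvectorUnitary : Matrix (Fin m) (Fin m) ℂ)ᴴ := by
  rw [mrpow, dif_pos hH]
  have h : Rd (fun i => Real.sqrt (hH.eigenvalues i))
      = Matrix.diagonal (fun i => ((hH.eigenvalues i ^ (1/2 : ℝ) : ℝ) : ℂ)) := by
    rw [Rd]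
    exact congrArg Matrix.diagonal
      (funext fun i => Complex.ofReal_inj.mpr (Real.sqrt_eq_rpow _))
  rw [h]

lemma conj_Rd_herm {U : Matrix (Fin m) (Fin m) ℂ} (d : Fin m → ℝ) :
    (U * Rd d * Uᴴ)ᴴ = U * Rd d * Uᴴ := by
  simp only [Matrix.conjTranspose_mul, Matrix.conjTranspose_conjTranspose, Rd_conjTranspose,
    Matrix.mul_assoc]

lemma conj_mul_conj {U A B : Matrix (Fin m) (Fin m) ℂ} (hU : Uᴴ * U = 1) :
    (U * A * Uᴴ) * (U * B * Uᴴ) = U * (A * B) * Uᴴ := by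
  calc (U * A * Uᴴ) * (U * B * Uᴴ) = U * (A * ((Uᴴ * U) * (B * Uᴴ))) := by
        simp only [Matrix.mul_assoc]
    _ = U * (A * B) * Uᴴ := by rw [hU, Matrix.one_mul]; simp only [Matrix.mul_assoc]

lemma mrpow_half_sq {H : Matrix (Fin m) (Fin m) ℂ} (hP : H.PosSemidef) :
    mrpow H (1/2) * mrpow H (1/2) = H := by
  have hH := hP.1
  rw [mrpow_half_eq hH, conj_mul_conj (UG_mul_cancel' hH.eigenvectorUnitary.2), Rd_mul_Rd]
  have h2 : (fun i => Real.sqrt (hH.eigenvalues i) * Real.sqrt (hH.eigenvalues i))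
      = hH.eigenvalues := by
    funext i
    exact Real.mul_self_sqrt (hP.eigenvalues_nonneg i)
  rw [h2, ← spectral_Rd hH]

lemma matAbs_herm (A : Matrix (Fin m) (Fin m) ℂ) : (matAbs A)ᴴ = matAbs A := by
  rw [matAbs, mrpow_half_eq (Matrix.isHermitian_conjTranspose_mul_self A)]
  exact conj_Rd_herm _

lemma matAbs_sq (A : Matrix (Fin m) (Fin m) ℂ) : matAbs A * matAbs A = Aᴴ * A :=
  mrpow_half_sq (Matrix.posSemidef_conjTranspose_mul_self A)

lemma polar (A : Matrix (Fin m) (Fin m) ℂ) : ∃ U ∈ UG, A = U * matAbs A := by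
  have hH := Matrix.isHermitian_conjTranspose_mul_self A
  have hW : (hH.eigenvectorUnitary : Matrix (Fin m) (Fin m) ℂ) ∈ UG := hH.eigenvectorUnitary.2
  set W : Matrix (Fin m) (Fin m) ℂ := (hH.eigenvectorUnitary : Matrix (Fin m) (Fin m) ℂ) with hWdef
  have hs : Aᴴ * A = W * Rd hH.eigenvalues * Wᴴ := spectral_Rd hH
  have hC : (A * W)ᴴ * (A * W) = Rd hH.eigenvalues := by
    rw [Matrix.conjTranspose_mul]
    calc Wᴴ * Aᴴ * (A * W) = Wᴴ * (Aᴴ * A) * W := by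
          simp only [Matrix.mul_assoc]
      _ = (Wᴴ * W) * Rd hH.eigenvalues * (Wᴴ * W) := by
          conv_lhs => rw [hs]
          simp only [Matrix.mul_assoc]
      _ = Rd hH.eigenvalues := by
          rw [UG_mul_cancel' hW, Matrix.one_mul, Matrix.mul_one]
  obtain ⟨V, hV, hVC⟩ := col_ext (A * W) _ hC
  refine ⟨V * Wᴴ, mul_mem hV (UG_star_mem hW), ?_⟩
  rw [matAbs, mrpow_half_eq hH]
  calc A = (A * W) * Wᴴ := by rw [Matrix.mul_assoc, UG_mul_cancel hW, Matrix.mul_one]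
    _ = V * Rd (fun i => Real.sqrt (hH.eigenvalues i)) * Wᴴ := by rw [← hVC]
    _ = V * Wᴴ * (W * Rd (fun i => Real.sqrt (hH.eigenvalues i)) * Wᴴ) := by
        simp only [Matrix.mul_assoc]
        rw [← Matrix.mul_assoc Wᴴ W, UG_mul_cancel' hW, Matrix.one_mul]

lemma diag_perm (f : Fin m → ℝ) (π : Equiv.Perm (Fin m)) :
    ∃ Q ∈ UG, Q * Rd (f ∘ π) * Qᴴ = Rd f := by
  classical
  set Q : Matrix (Fin m) (Fin m) ℂ :=
    Matrix.of (fun i j => if i = π j then (1 : ℂ) else 0) with hQdef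
  have hconj : ∀ a b : Fin m, Qᴴ a b = if b = π a then (1 : ℂ) else 0 := by
    intro a b
    simp only [hQdef, Matrix.conjTranspose_apply, Matrix.of_apply]
    rw [apply_ite (star : ℂ → ℂ)]
    simp
  refine ⟨Q, ?_, ?_⟩
  · rw [Matrix.mem_unitaryGroup_iff', Matrix.star_eq_conjTranspose]
    ext a b
    rw [Matrix.mul_apply]
    have : ∀ i, Qᴴ a i * Q i b
        = if i = π a then (if i = π b then (1:ℂ) else 0) else 0 := by
      intro i
      rw [hconj]
      simp only [hQdef, Matrix.of_apply]
      by_cases h1 : i = π a <;> by_cases h2 : i = π b <;> simp [h1, h2]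
    simp_rw [this]
    rw [Finset.sum_ite_eq' Finset.univ (π a)
      (fun i => if i = π b then (1:ℂ) else 0)]
    simp only [Finset.mem_univ, if_true, Matrix.one_apply]
    by_cases hab : a = b
    · simp [hab]
    · have : ¬ (π a = π b) := fun hc => hab (π.injective hc)
      simp [this, hab]
  · ext a b
    rw [Matrix.mul_apply]
    have hQR : ∀ c, (Q * Rd (f ∘ π)) a c = if a = π c then ((f (π c) : ℂ)) else 0 := by
      intro c
      rw [show Rd (f ∘ π) = Matrix.diagonal (fun i => ((f (π i)) : ℂ)) from rfl,
        Matrix.mul_diagonal]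
      simp only [hQdef, Matrix.of_apply]
      by_cases h1 : a = π c <;> simp [h1]
    have : ∀ c, (Q * Rd (f ∘ π)) a c * Qᴴ c b
        = if c = π.symm a then (if c = π.symm b then ((f a : ℂ)) else 0) else 0 := by
      intro c
      rw [hQR, hconj]
      by_cases h1 : c = π.symm a
      · subst h1
        by_cases h2 : π.symm a = π.symm b
        · have hab : a = b := by
            have := congrArg π h2
            simpa using this
          subst hab
          simp
        · have hba : ¬ (b = a) := fun hc => h2 (by rw [hc])
          simp [h2, hba]
      · have h1' : ¬ (a = π c) := fun hc => h1 (by rw [hc, Equiv.symm_apply_apply])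
        simp [h1', h1]
    simp_rw [this]
    rw [Finset.sum_ite_eq' Finset.univ (π.symm a)
      (fun c => if c = π.symm b then ((f a : ℂ)) else 0)]
    simp only [Finset.mem_univ, if_true]
    rw [show Rd f = Matrix.diagonal (fun i => ((f i) : ℂ)) from rfl, Matrix.diagonal_apply]
    by_cases hab : a = b
    · simp [hab]
    · have : ¬ (π.symm a = π.symm b) := fun hc => hab (by
        have := congrArg π hc
        simpa using this)
      simp [this, hab]

lemma svd (A : Matrix (Fin m) (Fin m) ℂ) :
    ∃ U ∈ UG, ∃ V ∈ UG, A = U * Rd (sv A) * V := by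
  obtain ⟨U₀, hU₀, hA⟩ := polar A
  have hH := Matrix.isHermitian_conjTranspose_mul_self A
  have hW : (hH.eigenvectorUnitary : Matrix (Fin m) (Fin m) ℂ) ∈ UG := hH.eigenvectorUnitary.2
  set W : Matrix (Fin m) (Fin m) ℂ := (hH.eigenvectorUnitary : Matrix (Fin m) (Fin m) ℂ) with hWdef
  have hsv : sv A = (fun i => Real.sqrt (hH.eigenvalues i)) ∘
      (Fin.revPerm.trans (Tuple.sort (fun i => Real.sqrt (hH.eigenvalues i)))) :=
    dsort_eq_comp _
  obtain ⟨Q, hQ, hQeq⟩ := diag_perm (fun i => Real.sqrt (hH.eigenvalues i))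
    (Fin.revPerm.trans (Tuple.sort (fun i => Real.sqrt (hH.eigenvalues i))))
  refine ⟨U₀ * W * Q, mul_mem (mul_mem hU₀ hW) hQ, Qᴴ * Wᴴ,
    mul_mem (UG_star_mem hQ) (UG_star_mem hW), ?_⟩
  rw [hsv]
  conv_lhs => rw [hA, matAbs, mrpow_half_eq hH, ← hQeq]
  simp only [Matrix.mul_assoc]
  rfl

end Aux



namespace Aux

open Matrix Finset

variable {m : ℕ}

local notation "UG" => Matrix.unitaryGroup (Fin m) ℂ

noncomputable def Ek (k : Fin m) : Matrix (Fin m) (Fin m) ℂ :=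
  Rd (fun i => if i ≤ k then (1:ℝ) else 0)

lemma mul_conj_norm (z : ℂ) : z * (starRingEnd ℂ) z = ((‖z‖ ^ 2 : ℝ) : ℂ) := by
  rw [Complex.mul_conj]
  norm_cast
  rw [Complex.normSq_eq_norm_sq]

lemma conj_mul_norm (z : ℂ) : (starRingEnd ℂ) z * z = ((‖z‖ ^ 2 : ℝ) : ℂ) := by
  rw [mul_comm]; exact mul_conj_norm z

lemma UG_row_sq {G : Matrix (Fin m) (Fin m) ℂ} (hG : G ∈ UG) (j : Fin m) :
    ∑ i, ‖G j i‖ ^ 2 = 1 := by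
  have h := congrFun (congrFun (UG_mul_cancel hG) j) j
  rw [Matrix.mul_apply, Matrix.one_apply_eq] at h
  have h3 : ∑ i, G j i * Gᴴ i j = ((∑ i, ‖G j i‖ ^ 2 : ℝ) : ℂ) := by
    push_cast
    refine Finset.sum_congr rfl fun i _ => ?_
    rw [Matrix.conjTranspose_apply,
      show star (G j i) = (starRingEnd ℂ) (G j i) from rfl, mul_conj_norm]
    push_cast
    ring
  rw [h3] at h
  exact_mod_cast h

lemma UG_col_sq {G : Matrix (Fin m) (Fin m) ℂ} (hG : G ∈ UG) (j : Fin m) :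
    ∑ i, ‖G i j‖ ^ 2 = 1 := by
  have h := congrFun (congrFun (UG_mul_cancel' hG) j) j
  rw [Matrix.mul_apply, Matrix.one_apply_eq] at h
  have h3 : ∑ i, Gᴴ j i * G i j = ((∑ i, ‖G i j‖ ^ 2 : ℝ) : ℂ) := by
    push_cast
    refine Finset.sum_congr rfl fun i _ => ?_
    rw [Matrix.conjTranspose_apply,
      show star (G i j) = (starRingEnd ℂ) (G i j) from rfl, conj_mul_norm]
    push_cast
    ring
  rw [h3] at h
  exact_mod_cast h

lemma Iic_filter (k : Fin m) : Finset.Iic k = Finset.univ.filter (fun i => i ≤ k) := by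
  ext i; simp

lemma core_bound (k : Fin m) (σ : Fin m → ℝ) (hmono : Antitone σ) (h0 : ∀ i, 0 ≤ σ i)
    {G H : Matrix (Fin m) (Fin m) ℂ} (hG : G ∈ UG) (hH : H ∈ UG) :
    (Matrix.trace (Rd σ * (G * Ek k * H))).re ≤ ∑ i ∈ Finset.Iic k, σ i := by
  classical
  set c : Fin m → ℝ := fun j => ∑ i ∈ Finset.Iic k, ‖G j i‖ * ‖H i j‖ with hc
  have hK : ∀ j, (G * Ek k * H) j j = ∑ i ∈ Finset.Iic k, G j i * H i j := by
    intro j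
    rw [Matrix.mul_apply]
    have h1 : ∀ i, (G * Ek k) j i = G j i * (if i ≤ k then (1:ℂ) else 0) := by
      intro i
      rw [Ek, show Rd (fun i => if i ≤ k then (1:ℝ) else 0)
        = Matrix.diagonal (fun i => ((if i ≤ k then (1:ℝ) else 0 : ℝ) : ℂ)) from rfl,
        Matrix.mul_diagonal]
      congr 1
      split <;> simp
    have h2 : ∀ i, (G * Ek k) j i * H i j
        = if i ≤ k then G j i * H i j else 0 := by
      intro i
      rw [h1]
      split <;> simp
    simp_rw [h2]
    rw [← Finset.sum_filter, ← Iic_filter]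
  have htr : (Matrix.trace (Rd σ * (G * Ek k * H))).re
      = ∑ j, σ j * ((G * Ek k * H) j j).re := by
    rw [Matrix.trace]
    have h1 : ∀ j, (Rd σ * (G * Ek k * H)).diag j
        = (σ j : ℂ) * (G * Ek k * H) j j := by
      intro j
      rw [Matrix.diag_apply, show Rd σ = Matrix.diagonal (fun i => ((σ i : ℝ) : ℂ)) from rfl,
        Matrix.diagonal_mul]
    rw [Finset.sum_congr rfl (fun j _ => h1 j), Complex.re_sum]
    exact Finset.sum_congr rfl fun j _ => Complex.re_ofReal_mul _ _
  have hKre : ∀ j, ((G * Ek k * H) j j).re ≤ c j := by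
    intro j
    rw [hK j, hc, Complex.re_sum]
    refine Finset.sum_le_sum fun i _ => ?_
    calc (G j i * H i j).re ≤ ‖G j i * H i j‖ := Complex.re_le_norm _
      _ = ‖G j i‖ * ‖H i j‖ := norm_mul _ _
  have hc0 : ∀ j, 0 ≤ c j := fun j => Finset.sum_nonneg fun i _ =>
    mul_nonneg (norm_nonneg _) (norm_nonneg _)
  have half_bound : ∀ (a b : Fin m → ℝ), (∀ i, 0 ≤ a i) → (∀ i, 0 ≤ b i) →
      ∀ s : Finset (Fin m), ∑ i ∈ s, a i * b i ≤ (∑ i ∈ s, a i ^ 2 + ∑ i ∈ s, b i ^ 2) / 2 := by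
    intro a b _ _ s
    rw [← Finset.sum_add_distrib]
    rw [div_eq_inv_mul, Finset.mul_sum]
    refine Finset.sum_le_sum fun i _ => ?_
    nlinarith [sq_nonneg (a i - b i)]
  have hc1 : ∀ j, c j ≤ 1 := by
    intro j
    have h1 := half_bound (fun i => ‖G j i‖) (fun i => ‖H i j‖)
      (fun i => norm_nonneg _) (fun i => norm_nonneg _) (Finset.Iic k)
    have h2 : ∑ i ∈ Finset.Iic k, ‖G j i‖ ^ 2 ≤ ∑ i, ‖G j i‖ ^ 2 :=
      Finset.sum_le_sum_of_subset_of_nonneg (Finset.subset_univ _) (fun i _ _ => sq_nonneg _)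
    have h3 : ∑ i ∈ Finset.Iic k, ‖H i j‖ ^ 2 ≤ ∑ i, ‖H i j‖ ^ 2 :=
      Finset.sum_le_sum_of_subset_of_nonneg (Finset.subset_univ _) (fun i _ _ => sq_nonneg _)
    have h4 := UG_row_sq hG j
    have h5 := UG_col_sq hH j
    rw [hc]
    nlinarith
  have hsum : ∑ j, c j ≤ ((Finset.Iic k).card : ℝ) := by
    rw [hc, Finset.sum_comm]
    have h1 : ∀ i ∈ Finset.Iic k, ∑ j, ‖G j i‖ * ‖H i j‖ ≤ 1 := by
      intro i _
      have h2 := half_bound (fun j => ‖G j i‖) (fun j => ‖H i j‖)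
        (fun j => norm_nonneg _) (fun j => norm_nonneg _) Finset.univ
      have h4 := UG_col_sq hG i
      have h5 := UG_row_sq hH i
      calc ∑ j, ‖G j i‖ * ‖H i j‖ ≤ (∑ j, ‖G j i‖ ^ 2 + ∑ j, ‖H i j‖ ^ 2) / 2 := h2
        _ = 1 := by rw [h4, h5]; norm_num
    calc ∑ i ∈ Finset.Iic k, ∑ j, ‖G j i‖ * ‖H i j‖ ≤ ∑ _i ∈ Finset.Iic k, (1:ℝ) :=
          Finset.sum_le_sum h1
      _ = ((Finset.Iic k).card : ℝ) := by rw [Finset.sum_const]; simp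
  rw [htr]
  have step1 : ∑ j, σ j * ((G * Ek k * H) j j).re ≤ ∑ j, σ j * c j :=
    Finset.sum_le_sum fun j _ => mul_le_mul_of_nonneg_left (hKre j) (h0 j)
  refine step1.trans ?_
  set t := σ k with ht
  have ht0 : 0 ≤ t := h0 k
  have key1 : ∀ j ∈ Finset.Iic k, σ j * c j ≤ σ j - t + t * c j := by
    intro j hj
    have hjk : j ≤ k := Finset.mem_Iic.mp hj
    have hσj : t ≤ σ j := hmono hjk
    nlinarith [mul_nonneg (sub_nonneg.mpr hσj) (sub_nonneg.mpr (hc1 j))]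
  have key2 : ∀ j ∈ (Finset.Iic k)ᶜ, σ j * c j ≤ t * c j := by
    intro j hj
    have hjk : ¬ (j ≤ k) := by simpa using hj
    have hσj : σ j ≤ t := hmono (le_of_not_ge hjk)
    exact mul_le_mul_of_nonneg_right hσj (hc0 j)
  have hsplit := Finset.sum_add_sum_compl (Finset.Iic k) (fun j => σ j * c j)
  have hcsplit := Finset.sum_add_sum_compl (Finset.Iic k) c
  calc ∑ j, σ j * c j
      = ∑ j ∈ Finset.Iic k, σ j * c j + ∑ j ∈ (Finset.Iic k)ᶜ, σ j * c j := hsplit.symm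
    _ ≤ ∑ j ∈ Finset.Iic k, (σ j - t + t * c j) + ∑ j ∈ (Finset.Iic k)ᶜ, t * c j :=
        add_le_add (Finset.sum_le_sum key1) (Finset.sum_le_sum key2)
    _ = ∑ j ∈ Finset.Iic k, σ j - ((Finset.Iic k).card : ℝ) * t
        + t * (∑ j ∈ Finset.Iic k, c j + ∑ j ∈ (Finset.Iic k)ᶜ, c j) := by
        rw [Finset.sum_add_distrib, Finset.sum_sub_distrib, Finset.sum_const,
          ← Finset.mul_sum, ← Finset.mul_sum]
        push_cast
        ring
    _ ≤ ∑ j ∈ Finset.Iic k, σ j := by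
        rw [hcsplit]
        nlinarith
  
end Aux


namespace Aux

open Matrix Finset

variable {m : ℕ}

local notation "UG" => Matrix.unitaryGroup (Fin m) ℂ

lemma kyfan_ub (k : Fin m) (M : Matrix (Fin m) (Fin m) ℂ) {U V : Matrix (Fin m) (Fin m) ℂ}
    (hU : U ∈ UG) (hV : V ∈ UG) :
    (Matrix.trace (U * M * V * Ek k)).re ≤ ∑ i ∈ Finset.Iic k, sv M i := by
  obtain ⟨X, hX, Y, hY, hM⟩ := svd M
  have htr : Matrix.trace (U * M * V * Ek k)
      = Matrix.trace (Rd (sv M) * ((Y * V) * Ek k * (U * X))) := by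
    conv_lhs => rw [hM]
    calc Matrix.trace (U * (X * Rd (sv M) * Y) * V * Ek k)
        = Matrix.trace ((U * X) * (Rd (sv M) * (Y * V * Ek k))) := by
          congr 1
          simp only [Matrix.mul_assoc]
      _ = Matrix.trace ((Rd (sv M) * (Y * V * Ek k)) * (U * X)) := Matrix.trace_mul_comm _ _
      _ = Matrix.trace (Rd (sv M) * ((Y * V) * Ek k * (U * X))) := by
          congr 1
          simp only [Matrix.mul_assoc]
  rw [htr]
  exact core_bound k (sv M) (sv_antitone M) (sv_nonneg M) (mul_mem hY hV) (mul_mem hU hX)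

lemma kyfan_attain (k : Fin m) (M : Matrix (Fin m) (Fin m) ℂ) :
    ∃ U ∈ UG, ∃ V ∈ UG,
      (Matrix.trace (U * M * V * Ek k)).re = ∑ i ∈ Finset.Iic k, sv M i := by
  obtain ⟨X, hX, Y, hY, hM⟩ := svd M
  refine ⟨Xᴴ, UG_star_mem hX, Yᴴ, UG_star_mem hY, ?_⟩
  have h1 : Xᴴ * M * Yᴴ = Rd (sv M) := by
    conv_lhs => rw [hM]
    calc Xᴴ * (X * Rd (sv M) * Y) * Yᴴ = Xᴴ * X * Rd (sv M) * (Y * Yᴴ) := by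
          simp only [Matrix.mul_assoc]
      _ = Rd (sv M) := by
          rw [UG_mul_cancel' hX, UG_mul_cancel hY, Matrix.one_mul, Matrix.mul_one]
  rw [h1, Ek, Rd_mul_Rd,
    show Rd (fun i => sv M i * (if i ≤ k then (1:ℝ) else 0))
      = Matrix.diagonal (fun i => ((sv M i * (if i ≤ k then (1:ℝ) else 0) : ℝ) : ℂ)) from rfl,
    Matrix.trace_diagonal, Complex.re_sum]
  have h2 : ∀ i : Fin m, (((sv M i * (if i ≤ k then (1:ℝ) else 0) : ℝ) : ℂ)).re
      = if i ≤ k then sv M i else 0 := by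
    intro i
    rw [Complex.ofReal_re]
    split <;> simp
  rw [Finset.sum_congr rfl (fun i _ => h2 i), ← Finset.sum_filter, ← Iic_filter]

lemma kyfan_add (k : Fin m) (M M' : Matrix (Fin m) (Fin m) ℂ) :
    ∑ i ∈ Finset.Iic k, sv (M + M') i
      ≤ ∑ i ∈ Finset.Iic k, sv M i + ∑ i ∈ Finset.Iic k, sv M' i := by
  obtain ⟨U, hU, V, hV, hEq⟩ := kyfan_attain k (M + M')
  have hsplit : U * (M + M') * V * Ek k = U * M * V * Ek k + U * M' * V * Ek k := by
    rw [Matrix.mul_add, Matrix.add_mul, Matrix.add_mul]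
  rw [← hEq, hsplit, Matrix.trace_add, Complex.add_re]
  exact add_le_add (kyfan_ub k M hU hV) (kyfan_ub k M' hU hV)

noncomputable def KF (k : Fin m) : Seminorm ℂ (Matrix (Fin m) (Fin m) ℂ) :=
  Seminorm.of (fun M => ∑ i ∈ Finset.Iic k, sv M i)
    (fun M M' => kyfan_add k M M')
    (fun c M => by
      simp only [sv_smul]
      rw [Finset.mul_sum])

lemma KF_apply (k : Fin m) (M : Matrix (Fin m) (Fin m) ℂ) :
    KF k M = ∑ i ∈ Finset.Iic k, sv M i := rfl

lemma KF_UInv (k : Fin m) : UInv (fun M => KF k M) := by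
  intro U hU V hV X
  simp only [KF_apply]
  rw [sv_unitary hU hV]

end Aux


namespace Aux

open Matrix Finset

variable {n : ℕ}

local notation "UGn" => Matrix.unitaryGroup (Fin n) ℂ
local notation "UG2" => Matrix.unitaryGroup (Fin (n + n)) ℂ

lemma bm_mul (X₁ Y₁ Z₁ W₁ X₂ Y₂ Z₂ W₂ : Matrix (Fin n) (Fin n) ℂ) :
    bm X₁ Y₁ Z₁ W₁ * bm X₂ Y₂ Z₂ W₂
      = bm (X₁*X₂ + Y₁*Z₂) (X₁*Y₂ + Y₁*W₂) (Z₁*X₂ + W₁*Z₂) (Z₁*Y₂ + W₁*W₂) := by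
  rw [bm, bm, bm, Matrix.reindex_apply, Matrix.reindex_apply, Matrix.reindex_apply,
    Matrix.submatrix_mul_equiv _ _ _ finSumFinEquiv.symm _, Matrix.fromBlocks_multiply]

lemma bm_conjT (X Y Z W : Matrix (Fin n) (Fin n) ℂ) :
    (bm X Y Z W)ᴴ = bm Xᴴ Zᴴ Yᴴ Wᴴ := by
  rw [bm, bm, Matrix.reindex_apply, Matrix.reindex_apply, Matrix.conjTranspose_submatrix,
    Matrix.fromBlocks_conjTranspose]

lemma bm_add (X Y Z W X' Y' Z' W' : Matrix (Fin n) (Fin n) ℂ) :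
    bm X Y Z W + bm X' Y' Z' W' = bm (X+X') (Y+Y') (Z+Z') (W+W') := by
  rw [bm, bm, bm, Matrix.reindex_apply, Matrix.reindex_apply, Matrix.reindex_apply,
    ← Matrix.fromBlocks_add, Matrix.submatrix_add]
  rfl

lemma bm_smul (c : ℂ) (X Y Z W : Matrix (Fin n) (Fin n) ℂ) :
    c • bm X Y Z W = bm (c•X) (c•Y) (c•Z) (c•W) := by
  rw [bm, bm, Matrix.reindex_apply, Matrix.reindex_apply,
    ← Matrix.fromBlocks_smul, Matrix.submatrix_smul]
  rfl

lemma bm_one : bm (1 : Matrix (Fin n) (Fin n) ℂ) 0 0 1 = 1 := by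
  rw [bm, Matrix.fromBlocks_one, Matrix.reindex_apply, Matrix.submatrix_one_equiv]

lemma bm_unitary {U V : Matrix (Fin n) (Fin n) ℂ} (hU : U ∈ UGn) (hV : V ∈ UGn) :
    bm U 0 0 V ∈ UG2 := by
  rw [Matrix.mem_unitaryGroup_iff', Matrix.star_eq_conjTranspose, bm_conjT, bm_mul]
  rw [UG_mul_cancel' hU, UG_mul_cancel' hV]
  simp only [Matrix.conjTranspose_zero, Matrix.mul_zero, Matrix.zero_mul, add_zero, zero_add,
    neg_zero]
  exact bm_one

lemma pinch (N : Seminorm ℂ (Matrix (Fin (n+n)) (Fin (n+n)) ℂ))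
    (hN : UInv (fun M => N M)) (X Y Z W : Matrix (Fin n) (Fin n) ℂ) :
    N (bm X 0 0 W) ≤ N (bm X Y Z W) := by
  set J : Matrix (Fin (n+n)) (Fin (n+n)) ℂ := bm 1 0 0 (-1) with hJdef
  have hJH : Jᴴ = J := by
    rw [hJdef, bm_conjT]
    simp only [Matrix.conjTranspose_zero, Matrix.conjTranspose_one, Matrix.conjTranspose_neg]
  have hJ : J ∈ UG2 := by
    rw [Matrix.mem_unitaryGroup_iff', Matrix.star_eq_conjTranspose, hJH, hJdef, bm_mul]
    simp only [Matrix.mul_zero, Matrix.zero_mul, add_zero, zero_add, Matrix.one_mul,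
      Matrix.neg_mul, Matrix.mul_neg, neg_neg, neg_zero, Matrix.mul_one]
    exact bm_one
  have hJconj : J * bm X Y Z W * Jᴴ = bm X (-Y) (-Z) W := by
    rw [hJH, hJdef, bm_mul, bm_mul]
    simp only [Matrix.mul_zero, Matrix.zero_mul, add_zero, zero_add, Matrix.one_mul,
      Matrix.neg_mul, Matrix.mul_neg, neg_neg, Matrix.mul_one]
  have hhalf : bm X 0 0 W = ((1:ℂ)/2) • (bm X Y Z W + J * bm X Y Z W * Jᴴ) := by
    rw [hJconj, bm_add, bm_smul]
    have hx : ∀ T : Matrix (Fin n) (Fin n) ℂ, ((1:ℂ)/2) • (T + T) = T := by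
      intro T
      rw [← two_smul ℂ T, smul_smul]
      norm_num
    rw [add_neg_cancel, add_neg_cancel, hx, hx]
    simp only [smul_zero]
  have hNJ : N (J * bm X Y Z W * Jᴴ) = N (bm X Y Z W) := hN J hJ Jᴴ (UG_star_mem hJ) _
  calc N (bm X 0 0 W) = ‖(1:ℂ)/2‖ * N (bm X Y Z W + J * bm X Y Z W * Jᴴ) := by
        rw [hhalf, map_smul_eq_mul]
    _ ≤ ‖(1:ℂ)/2‖ * (N (bm X Y Z W) + N (J * bm X Y Z W * Jᴴ)) :=
        mul_le_mul_of_nonneg_left (map_add_le_add N _ _) (norm_nonneg _)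
    _ = N (bm X Y Z W) := by
        rw [hNJ]
        have : ‖(1:ℂ)/2‖ = 1/2 := by norm_num
        rw [this]
        ring

lemma Rd_posSemidef {d : Fin n → ℝ} (hd : ∀ i, 0 ≤ d i) : (Rd d).PosSemidef := by
  rw [Rd]
  rw [Matrix.posSemidef_diagonal_iff]
  intro i
  exact_mod_cast hd i

lemma matAbs_posSemidef (A : Matrix (Fin n) (Fin n) ℂ) : (matAbs A).PosSemidef := by
  rw [matAbs, mrpow_half_eq (Matrix.isHermitian_conjTranspose_mul_self A)]
  exact (Rd_posSemidef (fun i => Real.sqrt_nonneg _)).mul_mul_conjTranspose_same _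

lemma main_ineq (A B : Matrix (Fin n) (Fin n) ℂ)
    (N : Seminorm ℂ (Matrix (Fin (n+n)) (Fin (n+n)) ℂ)) (hN : UInv (fun M => N M)) :
    N (bm A 0 0 B) ≤ N (bm (matAbs A + matAbs B) 0 0 0) := by
  obtain ⟨U₁, hU₁, hA⟩ := polar A
  obtain ⟨U₂, hU₂, hB⟩ := polar B
  have h1 : bm A 0 0 B = bm U₁ 0 0 U₂ * bm (matAbs A) 0 0 (matAbs B) := by
    rw [bm_mul]
    simp only [Matrix.mul_zero, Matrix.zero_mul, add_zero, zero_add]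
    rw [← hA, ← hB]
  have h2 : N (bm A 0 0 B) = N (bm (matAbs A) 0 0 (matAbs B)) := by
    rw [h1]
    have h := hN (bm U₁ 0 0 U₂) (bm_unitary hU₁ hU₂) 1 (one_mem _)
      (bm (matAbs A) 0 0 (matAbs B))
    rw [Matrix.mul_one] at h
    exact h
  have hPpsd := matAbs_posSemidef A
  have hQpsd := matAbs_posSemidef B
  set R := mrpow (matAbs A) (1/2) with hRdef
  set S := mrpow (matAbs B) (1/2) with hSdef
  have hRherm : Rᴴ = R := by
    rw [hRdef, mrpow_half_eq hPpsd.1]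
    exact conj_Rd_herm _
  have hSherm : Sᴴ = S := by
    rw [hSdef, mrpow_half_eq hQpsd.1]
    exact conj_Rd_herm _
  have hRR : R * R = matAbs A := mrpow_half_sq hPpsd
  have hSS : S * S = matAbs B := mrpow_half_sq hQpsd
  set Xm : Matrix (Fin (n+n)) (Fin (n+n)) ℂ := bm R S 0 0 with hXmdef
  have hXmH : Xmᴴ = bm Rᴴ 0 Sᴴ 0 := by
    rw [hXmdef, bm_conjT, Matrix.conjTranspose_zero]
  have h3 : Xmᴴ * Xm = bm (matAbs A) (R*S) (S*R) (matAbs B) := by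
    rw [hXmH, hXmdef, bm_mul, hRherm, hSherm]
    simp only [Matrix.mul_zero, Matrix.zero_mul, add_zero, zero_add]
    rw [hRR, hSS]
  have h4 : Xm * Xmᴴ = bm (matAbs A + matAbs B) 0 0 0 := by
    rw [hXmH, hXmdef, bm_mul, hRherm, hSherm]
    simp only [Matrix.mul_zero, Matrix.zero_mul, add_zero, zero_add]
    rw [hRR, hSS]
  have h5 : N (bm (matAbs A) 0 0 (matAbs B)) ≤ N (Xmᴴ * Xm) := by
    rw [h3]
    exact pinch N hN _ _ _ _
  have h6 : N (Xmᴴ * Xm) = N (Xm * Xmᴴ) := by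
    obtain ⟨Ux, hUx, Vx, hVx, hXm⟩ := svd Xm
    have e1 : Xmᴴ * Xm = Vxᴴ * (Rd (sv Xm) * Rd (sv Xm)) * Vx := by
      conv_lhs => rw [hXm]
      rw [Matrix.conjTranspose_mul, Matrix.conjTranspose_mul, Rd_conjTranspose]
      calc Vxᴴ * (Rd (sv Xm) * Uxᴴ) * (Ux * Rd (sv Xm) * Vx)
          = Vxᴴ * (Rd (sv Xm) * ((Uxᴴ * Ux) * (Rd (sv Xm) * Vx))) := by
            simp only [Matrix.mul_assoc]
        _ = Vxᴴ * (Rd (sv Xm) * Rd (sv Xm)) * Vx := by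
            rw [UG_mul_cancel' hUx, Matrix.one_mul]
            simp only [Matrix.mul_assoc]
    have e2 : Xm * Xmᴴ = Ux * (Rd (sv Xm) * Rd (sv Xm)) * Uxᴴ := by
      conv_lhs => rw [hXm]
      rw [Matrix.conjTranspose_mul, Matrix.conjTranspose_mul, Rd_conjTranspose]
      calc Ux * Rd (sv Xm) * Vx * (Vxᴴ * (Rd (sv Xm) * Uxᴴ))
          = Ux * (Rd (sv Xm) * ((Vx * Vxᴴ) * (Rd (sv Xm) * Uxᴴ))) := by
            simp only [Matrix.mul_assoc]
        _ = Ux * (Rd (sv Xm) * Rd (sv Xm)) * Uxᴴ := by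
            rw [UG_mul_cancel hVx, Matrix.one_mul]
            simp only [Matrix.mul_assoc]
    rw [e1, e2]
    have g1 := hN Vxᴴ (UG_star_mem hVx) Vx hVx (Rd (sv Xm) * Rd (sv Xm))
    have g2 := hN Ux hUx Uxᴴ (UG_star_mem hUx) (Rd (sv Xm) * Rd (sv Xm))
    exact g1.trans g2.symm
  rw [h2, ← h4]
  exact h5.trans (le_of_eq h6)

end Aux

theorem stmt15 {n : ℕ} (A B : Matrix (Fin n) (Fin n) ℂ) :
    (∀ N : Seminorm ℂ (Matrix (Fin (n + n)) (Fin (n + n)) ℂ), UInv N →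
      N (bm A 0 0 B) ≤ N (bm (matAbs A + matAbs B) 0 0 0)) ∧
    (∀ k : Fin (n + n),
      ∑ i ∈ Finset.Iic k, sv (bm A 0 0 B) i ≤
        ∑ i ∈ Finset.Iic k, sv (bm (matAbs A + matAbs B) 0 0 0) i) := by
  constructor
  · intro N hN
    exact Aux.main_ineq A B N hN
  · intro k
    have h := Aux.main_ineq A B (Aux.KF k) (Aux.KF_UInv k)
    simpa only [Aux.KF_apply] using h
end

section
/- Let A, B be n×n complex matrices such that AB is normal. Then for every unitarily invariant norm, |||AB||| ≤ |||BA|||. -/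
set_option maxHeartbeats 1000000
set_option synthInstance.maxHeartbeats 200000


open Matrix Finset
open scoped ComplexOrder

variable {n m : ℕ}

section AuxProof
open Matrix Polynomial

lemma key_det {n : ℕ} {K : Type*} [Field K] (x : K) (hx : x ≠ 0)
    (A B : Matrix (Fin n) (Fin n) K) :
    (x • 1 - A * B).det = (x • 1 - B * A).det := by
  have h : ∀ M : Matrix (Fin n) (Fin n) K, x • 1 - M = x • (1 - x⁻¹ • M) := by
    intro M
    rw [smul_sub, smul_smul, mul_inv_cancel₀ hx, one_smul]
  rw [h, h, det_smul, det_smul]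
  congr 1
  have h1 : (1 : Matrix (Fin n) (Fin n) K) - x⁻¹ • (A * B) = 1 + (-(x⁻¹) • A) * B := by
    rw [smul_mul_assoc, neg_smul, ← sub_eq_add_neg]
  have h2 : (1 : Matrix (Fin n) (Fin n) K) - x⁻¹ • (B * A) = 1 + B * (-(x⁻¹) • A) := by
    rw [mul_smul_comm, neg_smul, ← sub_eq_add_neg]
  rw [h1, h2, det_one_add_mul_comm]

lemma charpoly_comm {n : ℕ} (A B : Matrix (Fin n) (Fin n) ℂ) :
    (A * B).charpoly = (B * A).charpoly := by
  set K := RatFunc ℂ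
  set φ : Polynomial ℂ →+* K := (algebraMap (Polynomial ℂ) K : _ →+* K)
  have hφ : Function.Injective φ := IsFractionRing.injective (Polynomial ℂ) K
  apply hφ
  have hmap : ∀ M : Matrix (Fin n) (Fin n) ℂ,
      (charmatrix M).map φ = (φ X) • 1 - M.map (φ.comp C) := by
    intro M
    ext i j
    by_cases h : i = j <;>
      simp [h, charmatrix_apply_eq, charmatrix_apply_ne, Matrix.map_apply, one_apply,
        Matrix.sub_apply, Matrix.smul_apply, smul_eq_mul]
  have hx : (φ X : K) ≠ 0 := by
    simpa using fun h => X_ne_zero (hφ (h.trans (map_zero φ).symm))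
  calc φ (A * B).charpoly = ((charmatrix (A * B)).map φ).det := by
        rw [Matrix.charpoly, ← RingHom.mapMatrix_apply, ← RingHom.map_det]
    _ = ((φ X) • 1 - (A.map (φ.comp C)) * (B.map (φ.comp C))).det := by
        rw [hmap, Matrix.map_mul]
    _ = ((φ X) • 1 - (B.map (φ.comp C)) * (A.map (φ.comp C))).det := key_det _ hx _ _
    _ = ((charmatrix (B * A)).map φ).det := by rw [hmap, Matrix.map_mul]
    _ = φ (B * A).charpoly := by rw [Matrix.charpoly, ← RingHom.mapMatrix_apply, ← RingHom.map_det]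

lemma schur {n : ℕ} (M : Matrix (Fin n) (Fin n) ℂ) :
    ∃ U T : Matrix (Fin n) (Fin n) ℂ, U ∈ Matrix.unitaryGroup (Fin n) ℂ ∧
      (∀ i j : Fin n, (j : ℕ) < (i : ℕ) → T i j = 0) ∧ M = U * T * Uᴴ := by
  induction n with
  | zero => exact ⟨1, M, one_mem _, fun i _ _ => i.elim0, by simp⟩
  | succ n ih =>
    -- eigenvalue
    obtain ⟨lam, hlam⟩ : ∃ z : ℂ, M.charpoly.IsRoot z := by
      apply Complex.exists_root
      rw [Matrix.charpoly_degree_eq_dim]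
      simp only [Fintype.card_fin]
      exact_mod_cast n.succ_pos
    have hdet : (lam • (1 : Matrix (Fin (n+1)) (Fin (n+1)) ℂ) - M).det = 0 := by
      rw [Polynomial.IsRoot] at hlam
      rw [Matrix.charpoly, ← Polynomial.coe_evalRingHom, RingHom.map_det] at hlam
      convert hlam using 2
      ext i j
      by_cases h : i = j <;>
        simp [h, charmatrix_apply_eq, charmatrix_apply_ne, Matrix.sub_apply,
          Matrix.smul_apply, one_apply, smul_eq_mul]
    obtain ⟨v, hv0, hv⟩ := (Matrix.exists_mulVec_eq_zero_iff).2 hdet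
    have heig : M.mulVec v = lam • v := by
      rw [Matrix.sub_mulVec, Matrix.smul_mulVec, Matrix.one_mulVec, sub_eq_zero] at hv
      exact hv.symm
    -- normalize
    set E := EuclideanSpace ℂ (Fin (n+1))
    set v' : E := (WithLp.equiv 2 (Fin (n+1) → ℂ)).symm v with hv'
    have hv'0 : v' ≠ 0 := by
      rw [hv']; intro h; apply hv0; have := congrArg WithLp.ofLp h; simpa using this
    set u : E := ‖v'‖⁻¹ • v' with hu
    have hunorm : ‖u‖ = 1 := norm_smul_inv_norm hv'0
    have hu' : ∀ k, u k = (‖v'‖ : ℂ)⁻¹ * v k := by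
      intro k
      show (‖v'‖⁻¹ : ℝ) • (v k) = _
      rw [Complex.real_smul, Complex.ofReal_inv]
    -- orthonormal basis
    have hon : Orthonormal ℂ (Set.restrict {(0 : Fin (n+1))} (fun _ => u)) := by
      constructor
      · intro i; exact hunorm
      · intro i j hij
        exact absurd (Subtype.ext ((i.2 : (i : Fin (n+1)) ∈ _).trans
          ((j.2 : (j : Fin (n+1)) ∈ _)).symm)) hij
    obtain ⟨b, hb0⟩ := hon.exists_orthonormalBasis_extension_of_card_eq
      (by simp [E, finrank_euclideanSpace])
    have hb0 : b 0 = u := hb0 0 rfl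
    -- the unitary V
    set V : Matrix (Fin (n+1)) (Fin (n+1)) ℂ := Matrix.of fun i j => b j i with hV
    have hVV : Vᴴ * V = 1 := by
      ext i j
      have horth := orthonormal_iff_ite.1 b.orthonormal i j
      rw [PiLp.inner_apply] at horth
      simp only [RCLike.inner_apply] at horth
      rw [Finset.sum_congr rfl (fun x _ => mul_comm ((b j).ofLp x) _)] at horth
      simpa [Matrix.mul_apply, hV, Matrix.one_apply] using horth
    have hVmem : V ∈ Matrix.unitaryGroup (Fin (n+1)) ℂ := by
      rw [Matrix.mem_unitaryGroup_iff]
      exact mul_eq_one_comm.1 hVV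
    have hVV' : V * Vᴴ = 1 := mul_eq_one_comm.1 hVV
    -- W and its first column
    set W : Matrix (Fin (n+1)) (Fin (n+1)) ℂ := Vᴴ * M * V with hW
    have hMV0 : ∀ k, (M * V) k 0 = lam * u k := by
      intro k
      have hcol : ∀ l, V l 0 = u l := fun l => by
        rw [hV]; simp only [Matrix.of_apply]; rw [hb0]
      have : (M * V) k 0 = ∑ l, M k l * ((‖v'‖ : ℂ)⁻¹ * v l) := by
        rw [Matrix.mul_apply]
        congr 1; funext l; rw [hcol, hu']
      rw [this]
      have hMv : ∑ l, M k l * v l = lam * v k := by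
        have := congrFun heig k
        simpa [Matrix.mulVec, dotProduct, Pi.smul_apply, smul_eq_mul] using this
      calc ∑ l, M k l * ((‖v'‖ : ℂ)⁻¹ * v l)
          = (‖v'‖ : ℂ)⁻¹ * ∑ l, M k l * v l := by
            rw [Finset.mul_sum]; congr 1; funext l; ring
        _ = (‖v'‖ : ℂ)⁻¹ * (lam * v k) := by rw [hMv]
        _ = lam * u k := by rw [hu']; ring
    have hW0 : ∀ i, W i 0 = if i = 0 then lam else 0 := by
      intro i
      have horth := orthonormal_iff_ite.1 b.orthonormal i 0
      rw [PiLp.inner_apply] at horth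
      simp only [RCLike.inner_apply] at horth
      rw [Finset.sum_congr rfl (fun x _ => mul_comm ((b 0).ofLp x) _)] at horth
      have h1 : W i 0 = ∑ k, (starRingEnd ℂ) (b i k) * (lam * u k) := by
        rw [hW, mul_assoc, Matrix.mul_apply]
        congr 1; funext k
        rw [Matrix.conjTranspose_apply, hMV0, hV]
        rfl
      rw [h1]
      have h2 : ∑ k, (starRingEnd ℂ) (b i k) * (lam * u k)
          = lam * ∑ k, (starRingEnd ℂ) (b i k) * (b 0 k) := by
        rw [Finset.mul_sum]
        congr 1; funext k; rw [hb0]; ring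
      rw [h2, horth]
      by_cases h : i = 0 <;> simp [h]
    -- induction
    set M' : Matrix (Fin n) (Fin n) ℂ := W.submatrix Fin.succ Fin.succ with hM'def
    obtain ⟨U', T', hU'mem, hT'tri, hM'⟩ := ih M'
    have hU'1 : U'ᴴ * U' = 1 := by
      simpa [Matrix.star_eq_conjTranspose] using hU'mem.1
    have hU'2 : U' * U'ᴴ = 1 := mul_eq_one_comm.1 hU'1
    -- assembly
    set e : Fin 1 ⊕ Fin n ≃ Fin (n+1) := finSumFinEquiv.trans (finCongr (Nat.add_comm 1 n)) with he
    have he1 : e (Sum.inl 0) = 0 := rfl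
    have he2 : ∀ k : Fin n, e (Sum.inr k) = k.succ := by
      intro k
      apply Fin.ext
      simp [he, Fin.val_succ]
    have hes1 : e.symm 0 = Sum.inl 0 := by rw [← he1, Equiv.symm_apply_apply]
    have hes2 : ∀ k : Fin n, e.symm k.succ = Sum.inr k := fun k => by
      rw [← he2, Equiv.symm_apply_apply]
    set Ub : Matrix (Fin (n+1)) (Fin (n+1)) ℂ :=
      (Matrix.reindex e e) (Matrix.fromBlocks 1 0 0 U') with hUb
    have hUbH : Ubᴴ = (Matrix.reindex e e) (Matrix.fromBlocks 1 0 0 U'ᴴ) := by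
      rw [hUb]
      simp [Matrix.reindex_apply, Matrix.conjTranspose_submatrix, Matrix.fromBlocks_conjTranspose]
    have hmulre : ∀ X Y : Matrix (Fin 1 ⊕ Fin n) (Fin 1 ⊕ Fin n) ℂ,
        (Matrix.reindex e e X) * (Matrix.reindex e e Y) = Matrix.reindex e e (X * Y) := by
      intro X Y
      simp [Matrix.reindex_apply, Matrix.submatrix_mul_equiv]
    have hre1 : Matrix.reindex e e (1 : Matrix (Fin 1 ⊕ Fin n) (Fin 1 ⊕ Fin n) ℂ) = 1 := by
      simp [Matrix.reindex_apply, Matrix.submatrix_one_equiv]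
    have hUb1 : Ubᴴ * Ub = 1 := by
      rw [hUbH, hUb, hmulre, Matrix.fromBlocks_multiply]
      simp only [one_mul, mul_one, zero_mul, mul_zero, add_zero, zero_add,
        Matrix.mul_zero, Matrix.zero_mul, Matrix.mul_one, Matrix.one_mul, hU'1]
      rw [Matrix.fromBlocks_one, hre1]
    have hUb2 : Ub * Ubᴴ = 1 := mul_eq_one_comm.1 hUb1
    refine ⟨V * Ub, Ubᴴ * W * Ub, ?_, ?_, ?_⟩
    · rw [Matrix.mem_unitaryGroup_iff]
      have hst : star (V * Ub) = Ubᴴ * Vᴴ := by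
        simp [Matrix.star_eq_conjTranspose, Matrix.conjTranspose_mul]
      rw [hst, show V * Ub * (Ubᴴ * Vᴴ) = V * (Ub * Ubᴴ) * Vᴴ by
        simp only [Matrix.mul_assoc], hUb2, mul_one, hVV']
    · -- triangularity
      intro i j hij
      have hWre : W = Matrix.reindex e e (W.submatrix e e) := by
        simp [Matrix.reindex_apply, Matrix.submatrix_submatrix]
      have hWb : W.submatrix e e = Matrix.fromBlocks
          (Matrix.of fun _ _ => W 0 0) (Matrix.of fun (_ : Fin 1) j => W 0 j.succ)
          0 M' := by
        ext a c
        rcases a with a | a <;> rcases c with c | c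
        · simp [Matrix.submatrix_apply, Subsingleton.elim a 0, Subsingleton.elim c 0, he1]
        · simp [Matrix.submatrix_apply, Subsingleton.elim a 0, he1, he2]
        · simp only [Matrix.submatrix_apply, he1, he2, Subsingleton.elim c 0,
            Matrix.fromBlocks_apply₂₁, Matrix.zero_apply]
          rw [hW0]
          simp [Fin.succ_ne_zero]
        · simp [Matrix.submatrix_apply, he2, hM'def]
      have hbr : U'ᴴ * M' * U' = T' := by
        rw [hM', show U'ᴴ * (U' * T' * U'ᴴ) * U' = (U'ᴴ * U') * T' * (U'ᴴ * U') by
          simp only [Matrix.mul_assoc], hU'1, one_mul, mul_one]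
      have hT : Ubᴴ * W * Ub = Matrix.reindex e e
          (Matrix.fromBlocks (Matrix.of fun _ _ => W 0 0)
            ((Matrix.of fun (_ : Fin 1) j => W 0 j.succ) * U') 0 T') := by
        rw [hUbH]
        conv_lhs => rw [hWre]
        rw [hUb, hmulre, hmulre, hWb, Matrix.fromBlocks_multiply, Matrix.fromBlocks_multiply]
        have hcan : ∀ X : Matrix (Fin n) (Fin n) ℂ, U'ᴴ * (U' * X) = X := fun X => by
          rw [← Matrix.mul_assoc, hU'1, Matrix.one_mul]
        congr 1 <;> simp [hbr, Matrix.mul_assoc, hM', hU'1, hcan] <;> rfl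
      rw [hT, Matrix.reindex_apply, Matrix.submatrix_apply]
      have hi0 : i ≠ 0 := by
        rintro rfl
        simp at hij
      rcases Fin.eq_succ_of_ne_zero hi0 with ⟨i', rfl⟩
      rw [hes2]
      rcases Fin.eq_zero_or_eq_succ j with rfl | ⟨j', rfl⟩
      · rw [hes1]
        simp
      · rw [hes2]
        simp only [Matrix.fromBlocks_apply₂₂]
        apply hT'tri
        simp only [Fin.val_succ] at hij
        omega
    · -- M = (V*Ub) * T * (V*Ub)ᴴ
      have hstar : (V * Ub)ᴴ = Ubᴴ * Vᴴ := by simp [Matrix.conjTranspose_mul]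
      rw [hstar]
      have h1 : V * Ub * (Ubᴴ * W * Ub) * (Ubᴴ * Vᴴ)
          = V * ((Ub * Ubᴴ) * W * (Ub * Ubᴴ)) * Vᴴ := by
        simp only [Matrix.mul_assoc]
      rw [h1, hUb2, one_mul, mul_one, hW,
        show V * (Vᴴ * M * V) * Vᴴ = (V * Vᴴ) * M * (V * Vᴴ) by simp only [Matrix.mul_assoc],
        hVV', one_mul, mul_one]

lemma tri_normal_diag {n : ℕ} {T : Matrix (Fin n) (Fin n) ℂ}
    (htri : ∀ i j : Fin n, (j : ℕ) < (i : ℕ) → T i j = 0)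
    (hnorm : Tᴴ * T = T * Tᴴ) : ∀ i j : Fin n, i ≠ j → T i j = 0 := by
  suffices H : ∀ m : ℕ, ∀ i j : Fin n, (i : ℕ) = m → (i : ℕ) < (j : ℕ) → T i j = 0 by
    intro i j hij
    rcases lt_or_gt_of_ne (show (i : ℕ) ≠ (j : ℕ) from fun h => hij (Fin.ext h)) with h | h
    · exact H i.1 i j rfl h
    · exact htri i j h
  intro m
  induction m using Nat.strong_induction_on with
  | _ m IH =>
    intro i j him hij
    have hdiag := congrArg (fun X : Matrix (Fin n) (Fin n) ℂ => X i i) hnorm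
    simp only [Matrix.mul_apply, Matrix.conjTranspose_apply] at hdiag
    -- hdiag : ∑ k, star (T k i) * T k i = ∑ k, T i k * star (T i k)
    have hL : ∑ k, star (T k i) * T k i = (Complex.normSq (T i i) : ℂ) := by
      rw [Finset.sum_eq_single i]
      · rw [Complex.star_def, ← Complex.normSq_eq_conj_mul_self]
      · intro k _ hki
        rcases lt_or_gt_of_ne (show (k : ℕ) ≠ (i : ℕ) from fun h => hki (Fin.ext h)) with h | h
        · rw [IH k.1 (him ▸ h) k i rfl h, star_zero, zero_mul]
        · rw [htri k i h, star_zero, zero_mul]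
      · intro h; exact absurd (Finset.mem_univ i) h
    have hR : ∑ k, T i k * star (T i k) = ∑ k, (Complex.normSq (T i k) : ℂ) := by
      congr 1; funext k
      rw [Complex.star_def, Complex.mul_conj]
    rw [hL, hR] at hdiag
    have hreal : Complex.normSq (T i i) = ∑ k, Complex.normSq (T i k) := by
      have := hdiag
      rw [← Complex.ofReal_sum] at this
      exact_mod_cast this
    have hsplit : ∑ k, Complex.normSq (T i k)
        = Complex.normSq (T i i) + ∑ k ∈ Finset.univ.erase i, Complex.normSq (T i k) := by
      rw [← Finset.add_sum_erase _ _ (Finset.mem_univ i)]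
    have hzero : ∑ k ∈ Finset.univ.erase i, Complex.normSq (T i k) = 0 := by
      have := hreal.trans hsplit
      linarith
    have hterm : Complex.normSq (T i j) = 0 := by
      have hnonneg : ∀ k ∈ Finset.univ.erase i, 0 ≤ Complex.normSq (T i k) :=
        fun k _ => Complex.normSq_nonneg _
      have := (Finset.sum_eq_zero_iff_of_nonneg hnonneg).1 hzero j
        (Finset.mem_erase.2 ⟨fun h => by subst h; omega, Finset.mem_univ j⟩)
      exact this
    exact Complex.normSq_eq_zero.1 hterm

lemma pinch {n : ℕ} (N : Seminorm ℂ (Matrix (Fin n) (Fin n) ℂ)) (hN : UInv N)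
    (M : Matrix (Fin n) (Fin n) ℂ) :
    N (Matrix.diagonal (fun i => M i i)) ≤ N M := by
  classical
  set s : Bool → ℂ := fun b => if b then 1 else -1 with hs
  have hss : ∀ b, s b * s b = 1 := by intro b; cases b <;> simp [hs]
  have hsstar : ∀ b, star (s b) = s b := by intro b; cases b <;> simp [hs]
  set D : (Fin n → Bool) → Matrix (Fin n) (Fin n) ℂ :=
    fun ε => Matrix.diagonal (fun i => s (ε i)) with hD
  have hDmem : ∀ ε, D ε ∈ Matrix.unitaryGroup (Fin n) ℂ := by
    intro ε
    rw [Matrix.mem_unitaryGroup_iff]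
    rw [hD, Matrix.star_eq_conjTranspose, Matrix.diagonal_conjTranspose,
      Matrix.diagonal_mul_diagonal]
    ext i j
    by_cases hij : i = j
    · subst hij
      simp [Matrix.diagonal_apply_eq, Matrix.one_apply_eq, Pi.star_apply, hsstar, hss]
    · simp [Matrix.diagonal_apply_ne _ hij, Matrix.one_apply_ne hij]
  have key : ∑ ε : Fin n → Bool, D ε * M * D ε
      = ((2 : ℂ) ^ n) • Matrix.diagonal (fun i => M i i) := by
    ext i j
    simp only [Matrix.sum_apply, Matrix.smul_apply]
    have hentry : ∀ ε, (D ε * M * D ε) i j = s (ε i) * M i j * s (ε j) := by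
      intro ε
      show (Matrix.diagonal (fun i => s (ε i)) * M * Matrix.diagonal (fun i => s (ε i))) i j = _
      rw [Matrix.mul_diagonal, Matrix.diagonal_mul]
    simp only [hentry]
    by_cases h : i = j
    · subst h
      have : ∀ ε : Fin n → Bool, s (ε i) * M i i * s (ε i) = M i i := by
        intro ε
        rw [mul_comm (s (ε i)) (M i i), mul_assoc, hss, mul_one]
      rw [Finset.sum_congr rfl (fun ε _ => this ε), Finset.sum_const]
      simp [Matrix.diagonal_apply_eq, Fintype.card_fun, smul_eq_mul, mul_comm]
    · rw [Matrix.diagonal_apply_ne _ h, smul_zero]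
      have hflip : ∀ ε : Fin n → Bool,
          s ((Function.update ε i (!ε i)) i) = -(s (ε i)) := by
        intro ε
        rw [Function.update_self]
        cases ε i <;> simp [hs]
      have hsneg : ∀ b : Bool, s (!b) = -(s b) := by intro b; cases b <;> simp [hs]
      apply Finset.sum_ninvolution (fun ε => Function.update ε i (!ε i))
      · intro ε
        have hji : j ≠ i := fun hh => h hh.symm
        rw [Function.update_self, Function.update_of_ne hji, hsneg]
        ring
      · intro ε _
        intro heq
        have := congrFun heq i
        rw [Function.update_self] at this
        exact Bool.not_ne_self _ this
      · intro ε
        exact Finset.mem_univ _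
      · intro ε
        funext k
        by_cases hk : k = i
        · subst hk
          simp [Function.update_idem, Function.update_self]
        · rw [Function.update_of_ne hk, Function.update_of_ne hk]
  have hcard : (Finset.univ : Finset (Fin n → Bool)).card = 2 ^ n := by
    simp [Fintype.card_fun]
  calc N (Matrix.diagonal fun i => M i i)
      = ((2:ℝ) ^ n)⁻¹ * N (((2 : ℂ) ^ n) • Matrix.diagonal (fun i => M i i)) := by
        rw [map_smul_eq_mul]
        have : ‖(2:ℂ)^n‖ = (2:ℝ)^n := by
          rw [norm_pow]; norm_num
        rw [this, ← mul_assoc, inv_mul_cancel₀ (by positivity), one_mul]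
    _ = ((2:ℝ) ^ n)⁻¹ * N (∑ ε : Fin n → Bool, D ε * M * D ε) := by rw [key]
    _ ≤ ((2:ℝ) ^ n)⁻¹ * ∑ ε : Fin n → Bool, N (D ε * M * D ε) := by
        apply mul_le_mul_of_nonneg_left _ (by positivity)
        have hNsum : ∀ (t : Finset (Fin n → Bool)) (f : (Fin n → Bool) → Matrix (Fin n) (Fin n) ℂ),
            N (∑ x ∈ t, f x) ≤ ∑ x ∈ t, N (f x) := by
          intro t f
          induction t using Finset.cons_induction with
          | empty => simp
          | cons a t ha ih =>
            rw [Finset.sum_cons, Finset.sum_cons]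
            exact le_trans (map_add_le_add N _ _) (by linarith)
        exact hNsum _ _
    _ = ((2:ℝ) ^ n)⁻¹ * ∑ ε : Fin n → Bool, N M := by
        congr 1
        apply Finset.sum_congr rfl
        intro ε _
        exact hN (D ε) (hDmem ε) (D ε) (hDmem ε) M
    _ = N M := by
        rw [Finset.sum_const, hcard, nsmul_eq_mul, ← mul_assoc]
        push_cast
        rw [inv_mul_cancel₀ (by positivity : ((2:ℝ)^n) ≠ 0), one_mul]

lemma exists_perm_comp {n : ℕ} (f g : Fin n → ℂ)
    (h : Finset.univ.val.map f = Finset.univ.val.map g) :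
    ∃ σ : Equiv.Perm (Fin n), f = g ∘ σ := by
  classical
  have haux : ∀ (f : Fin n → ℂ) (c : ℂ),
      (Finset.univ.filter (fun i => f i = c)).card
        = Multiset.count c (Finset.univ.val.map f) := by
    intro f c
    rw [Multiset.count_map, Finset.card, Finset.filter_val]
    congr 1
    exact Multiset.filter_congr (fun x _ => eq_comm)
  have hcard : ∀ c : ℂ, Fintype.card {i // f i = c} = Fintype.card {i // g i = c} := by
    intro c
    rw [Fintype.card_subtype, Fintype.card_subtype, haux, haux, h]
  exact ⟨Equiv.ofFiberEquiv (f := f) (g := g) (fun c => Fintype.equivOfCardEq (hcard c)),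
    funext fun a => (Equiv.ofFiberEquiv_map _ a).symm⟩

lemma charpoly_unitary_conj {n : ℕ} (U T : Matrix (Fin n) (Fin n) ℂ)
    (h1 : U * Uᴴ = 1) : (U * T * Uᴴ).charpoly = T.charpoly := by
  have hmap1 : U.map (C : ℂ →+* ℂ[X]) * Uᴴ.map (C : ℂ →+* ℂ[X]) = 1 := by
    rw [← Matrix.map_mul, h1, Matrix.map_one _ (map_zero C) (map_one C)]
  have hkey : charmatrix (U * T * Uᴴ)
      = (U.map (C : ℂ →+* ℂ[X])) * charmatrix T * (Uᴴ.map (C : ℂ →+* ℂ[X])) := by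
    rw [charmatrix, charmatrix, Matrix.mul_sub, Matrix.sub_mul]
    congr 1
    · have hc := (Matrix.scalar_commute (X : ℂ[X])
        (fun r => Commute.all _ r) (U.map (C : ℂ →+* ℂ[X]))).eq
      rw [← hc, mul_assoc, hmap1, mul_one]
    · rw [RingHom.mapMatrix_apply, RingHom.mapMatrix_apply, Matrix.map_mul, Matrix.map_mul]
  rw [Matrix.charpoly, Matrix.charpoly, hkey, Matrix.det_mul, Matrix.det_mul]
  rw [show (U.map (C : ℂ →+* ℂ[X])).det * (charmatrix T).det * ((Uᴴ).map (C : ℂ →+* ℂ[X])).det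
    = ((U.map (C : ℂ →+* ℂ[X])).det * ((Uᴴ).map (C : ℂ →+* ℂ[X])).det) * (charmatrix T).det
    from by ring, ← Matrix.det_mul, hmap1, Matrix.det_one, one_mul]

-- permutation matrices are unitary, and conjugating a diagonal matrix permutes its entries
lemma perm_diag_N {n : ℕ} (N : Seminorm ℂ (Matrix (Fin n) (Fin n) ℂ)) (hN : UInv N)
    (t : Fin n → ℂ) (σ : Equiv.Perm (Fin n)) :
    N (Matrix.diagonal (t ∘ σ)) = N (Matrix.diagonal t) := by
  classical
  have hPmem : ∀ τ : Equiv.Perm (Fin n),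
      τ.toPEquiv.toMatrix ∈ Matrix.unitaryGroup (Fin n) ℂ := by
    intro τ
    rw [Matrix.mem_unitaryGroup_iff]
    ext i j
    rw [Matrix.mul_apply]
    simp only [PEquiv.toMatrix_apply, Matrix.star_eq_conjTranspose,
      Matrix.conjTranspose_apply, Equiv.toPEquiv_apply, Option.mem_def, Option.some_inj]
    rw [Finset.sum_eq_single (τ i)]
    · by_cases h : i = j
      · simp [h, Matrix.one_apply]
      · simp only [Matrix.one_apply, if_neg h, (Equiv.injective τ).eq_iff]
        rw [if_pos trivial, one_mul, if_neg (fun hh : j = i => h hh.symm), star_zero]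
    · intro k _ hk
      simp [Ne.symm hk]
    · intro h; exact absurd (Finset.mem_univ _) h
  have hrw : Matrix.diagonal (t ∘ σ)
      = σ.toPEquiv.toMatrix * Matrix.diagonal t * σ.symm.toPEquiv.toMatrix := by
    rw [PEquiv.toMatrix_toPEquiv_mul, PEquiv.mul_toMatrix_toPEquiv, Equiv.symm_symm,
      Matrix.submatrix_submatrix]
    rw [show (⇑σ ∘ id) = ⇑σ from rfl, show (id ∘ ⇑σ) = ⇑σ from rfl]
    rw [Matrix.submatrix_diagonal _ _ (Equiv.injective σ)]
  rw [hrw]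
  exact hN _ (hPmem σ) _ (hPmem σ.symm) _


theorem stmt18 {n : ℕ} (A B : Matrix (Fin n) (Fin n) ℂ)
    (hAB : IsStarNormal (A * B))
    (N : Seminorm ℂ (Matrix (Fin n) (Fin n) ℂ)) (hN : UInv N) :
    N (A * B) ≤ N (B * A) := by
  classical
  obtain ⟨U, T1, hU, hT1tri, hABe⟩ := schur (A * B)
  obtain ⟨V, T2, hV, hT2tri, hBAe⟩ := schur (B * A)
  have hU1 : U * Uᴴ = 1 := by
    have := hU.2
    rwa [Matrix.star_eq_conjTranspose] at this
  have hU2 : Uᴴ * U = 1 := by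
    have := hU.1
    rwa [Matrix.star_eq_conjTranspose] at this
  have hV1 : V * Vᴴ = 1 := by
    have := hV.2
    rwa [Matrix.star_eq_conjTranspose] at this
  -- T1 is normal
  have hT1e : T1 = Uᴴ * (A * B) * U := by
    rw [hABe, show Uᴴ * (U * T1 * Uᴴ) * U = (Uᴴ * U) * T1 * (Uᴴ * U) by
      simp only [Matrix.mul_assoc], hU2, one_mul, mul_one]
  have hABn : (A * B)ᴴ * (A * B) = (A * B) * (A * B)ᴴ := by
    have h := hAB.star_comm_self.eq
    rwa [Matrix.star_eq_conjTranspose] at h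
  have hT1norm : T1ᴴ * T1 = T1 * T1ᴴ := by
    have hsc : T1ᴴ = Uᴴ * (A * B)ᴴ * U := by
      rw [hT1e, Matrix.conjTranspose_mul, Matrix.conjTranspose_mul,
        Matrix.conjTranspose_conjTranspose]
      simp only [Matrix.mul_assoc]
    have hcanU : ∀ X : Matrix (Fin n) (Fin n) ℂ, U * (Uᴴ * X) = X := fun X => by
      rw [← Matrix.mul_assoc, hU1, Matrix.one_mul]
    rw [hsc, hT1e]
    calc (Uᴴ * (A * B)ᴴ * U) * (Uᴴ * (A * B) * U)
        = Uᴴ * ((A * B)ᴴ * (U * Uᴴ) * (A * B)) * U := by simp only [Matrix.mul_assoc]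
      _ = Uᴴ * ((A * B) * (U * Uᴴ) * (A * B)ᴴ) * U := by
          rw [hU1, Matrix.mul_one, Matrix.mul_one, hABn]
      _ = (Uᴴ * (A * B) * U) * (Uᴴ * (A * B)ᴴ * U) := by
          rw [hU1, Matrix.mul_one]
          simp only [Matrix.mul_assoc, hcanU]
  have hT1offdiag := tri_normal_diag hT1tri hT1norm
  set d : Fin n → ℂ := fun i => T1 i i with hd
  set t : Fin n → ℂ := fun i => T2 i i with ht
  have hT1diag : T1 = Matrix.diagonal d := by
    ext i j
    by_cases h : i = j
    · subst h; simp [Matrix.diagonal_apply_eq, hd]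
    · rw [hT1offdiag i j h, Matrix.diagonal_apply_ne _ h]
  -- characteristic polynomials
  have hcp1 : T1.charpoly = ∏ i, (X - C (d i)) :=
    Matrix.charpoly_of_upperTriangular T1 (fun i j hlt => hT1tri i j hlt)
  have hcp2 : T2.charpoly = ∏ i, (X - C (t i)) :=
    Matrix.charpoly_of_upperTriangular T2 (fun i j hlt => hT2tri i j hlt)
  have hcp : T1.charpoly = T2.charpoly := by
    have h1 : (A * B).charpoly = T1.charpoly := by
      rw [hABe]; exact charpoly_unitary_conj U T1 hU1
    have h2 : (B * A).charpoly = T2.charpoly := by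
      rw [hBAe]; exact charpoly_unitary_conj V T2 hV1
    rw [← h1, ← h2, charpoly_comm]
  -- multisets of diagonal entries agree
  have hms : Finset.univ.val.map d = Finset.univ.val.map t := by
    have hp : ((Finset.univ.val.map d).map (fun a => X - C a)).prod
        = ((Finset.univ.val.map t).map (fun a => X - C a)).prod := by
      calc ((Finset.univ.val.map d).map (fun a => X - C a)).prod
          = ∏ i, (X - C (d i)) := by
            rw [Multiset.map_map]
            exact (Finset.prod_eq_multiset_prod _ _).symm
        _ = ∏ i, (X - C (t i)) := by rw [← hcp1, ← hcp2, hcp]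
        _ = ((Finset.univ.val.map t).map (fun a => X - C a)).prod := by
            rw [Multiset.map_map]
            exact Finset.prod_eq_multiset_prod _ _
    have := congrArg Polynomial.roots hp
    rwa [Polynomial.roots_multiset_prod_X_sub_C, Polynomial.roots_multiset_prod_X_sub_C] at this
  obtain ⟨σ, hσ⟩ := exists_perm_comp d t hms
  -- the norm chain
  have hNAB : N (A * B) = N T1 := by
    rw [hABe]
    exact hN U hU Uᴴ (by simpa [Matrix.star_eq_conjTranspose] using Unitary.star_mem hU) T1
  have hNBA : N (B * A) = N T2 := by
    rw [hBAe]
    exact hN V hV Vᴴ (by simpa [Matrix.star_eq_conjTranspose] using Unitary.star_mem hV) T2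
  calc N (A * B) = N T1 := hNAB
    _ = N (Matrix.diagonal d) := by rw [← hT1diag]
    _ = N (Matrix.diagonal (t ∘ σ)) := by rw [← hσ]
    _ = N (Matrix.diagonal t) := perm_diag_N N hN t σ
    _ ≤ N T2 := pinch N hN T2
    _ = N (B * A) := hNBA.symm

end AuxProof
end
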